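/- arXiv:2406.15436 — 7 statements merged into one kernel-verified Lean document; each statement's English description precedes it below -/
import Mathlib

section
/- Let X be a vector space, Y_ρ a ρ-complete convex modular space, α: X × X → [0,∞) a function, and φ: X × X → Y_ρ a mapping with φ(x,0) = φ(0,z) = 0 satisfying ρ(φ(x+y,z+w) + φ(x−y,z−w) − 2φ(x,z) − 2φ(x,w)) ≤ α(x,y)α(z,w) for all x,y,z,w ∈ X. Then for every positive integer k and all x,z ∈ X: ρ((1/2ᵏ)φ(2ᵏx, z) − φ(x,z)) ≤ (∑_{j=1}^{k} 2^{−j} α(2^{j−1}x, 2^{j−1}x)) · α(z,0). -/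
theorem stmt9 {X Y : Type*} [AddCommGroup X] [Module ℝ X] [AddCommGroup Y] [Module ℝ Y]
    (ρ : Y → ℝ) (α : X → X → ℝ) (φ : X → X → Y)
    (hzero : ∀ u : Y, ρ u = 0 ↔ u = 0)
    (hnonneg : ∀ u : Y, 0 ≤ ρ u)
    (hsym : ∀ (a : ℝ) (u : Y), |a| = 1 → ρ (a • u) = ρ u)
    (hconv : ∀ (a b : ℝ) (u v : Y), 0 ≤ a → 0 ≤ b → a + b = 1 →
      ρ (a • u + b • v) ≤ a * ρ u + b * ρ v)
    (hα : ∀ x y, 0 ≤ α x y)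
    (hzeroL : ∀ z : X, φ 0 z = 0) (hzeroR : ∀ x : X, φ x 0 = 0)
    (hineq : ∀ x y z w : X,
      ρ (φ (x + y) (z + w) + φ (x - y) (z - w) - 2 • φ x z - 2 • φ x w) ≤
        α x y * α z w) :
    ∀ (k : ℕ), 1 ≤ k → ∀ x z : X,
      ρ ((1 / 2 ^ k : ℝ) • φ ((2 ^ k : ℝ) • x) z - φ x z) ≤
        (∑ j ∈ Finset.range k, (1 / 2 ^ (j + 1) : ℝ) * α ((2 ^ j : ℝ) • x) ((2 ^ j : ℝ) • x))
          * α z 0 := by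
  have hρ0 : ρ 0 = 0 := (hzero 0).mpr rfl
  have key : ∀ x z : X, ρ (φ ((2:ℝ) • x) z - (2:ℝ) • φ x z) ≤ α x x * α z 0 := by
    intro x z
    have h := hineq x x z 0
    have e1 : φ (x + x) (z + 0) + φ (x - x) (z - 0) - 2 • φ x z - 2 • φ x 0 =
        φ ((2:ℝ) • x) z - (2:ℝ) • φ x z := by
      rw [add_zero, sub_self, sub_zero, hzeroL, hzeroR, ← two_smul ℝ x, two_smul ℝ (φ x z)]
      push_cast
      abel
    rw [e1] at h
    exact h
  have half : ∀ (u : Y), ρ ((1/2 : ℝ) • u) ≤ (1/2) * ρ u := by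
    intro u
    have := hconv (1/2) (1/2) u 0 (by norm_num) (by norm_num) (by norm_num)
    simpa [hρ0] using this
  intro k hk
  induction k, hk using Nat.le_induction with
  | base =>
    intro x z
    have h := half (φ ((2:ℝ) • x) z - (2:ℝ) • φ x z)
    have e : (1/2 : ℝ) • (φ ((2:ℝ) • x) z - (2:ℝ) • φ x z) =
        (1 / 2 ^ 1 : ℝ) • φ ((2 ^ 1 : ℝ) • x) z - φ x z := by
      rw [smul_sub, smul_smul]
      norm_num
    rw [e] at h
    refine h.trans ?_
    have := key x z
    simp only [Finset.sum_range_one, pow_zero, pow_one, one_smul, zero_add]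
    rw [mul_assoc]
    linarith
  | succ k hk IH =>
    intro x z
    have IH' := IH ((2:ℝ) • x) z
    have hkey := key x z
    set u := (1 / 2 ^ k : ℝ) • φ ((2 ^ k : ℝ) • ((2:ℝ) • x)) z - φ ((2:ℝ) • x) z with hu
    set v := φ ((2:ℝ) • x) z - (2:ℝ) • φ x z with hv
    have decomp : (1 / 2 ^ (k+1) : ℝ) • φ ((2 ^ (k+1) : ℝ) • x) z - φ x z =
        (1/2 : ℝ) • u + (1/2 : ℝ) • v := by
      rw [hu, hv, smul_sub, smul_sub, smul_smul, smul_smul, smul_smul]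
      rw [show (2 ^ k * 2 : ℝ) = 2 ^ (k+1) by ring,
        show (1/2 : ℝ) * (1 / 2 ^ k) = 1 / 2 ^ (k+1) by rw [pow_succ]; ring,
        show ((1:ℝ)/2) * 2 = 1 by norm_num, one_smul]
      abel
    have hc := hconv (1/2) (1/2) u v (by norm_num) (by norm_num) (by norm_num)
    rw [decomp]
    refine hc.trans ?_
    rw [Finset.sum_range_succ']
    have hsum : (∑ i ∈ Finset.range k,
        (1 / 2 ^ (i + 1 + 1) : ℝ) * α ((2 ^ (i+1) : ℝ) • x) ((2 ^ (i+1) : ℝ) • x)) * α z 0 =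
        (1/2 : ℝ) * ((∑ i ∈ Finset.range k,
          (1 / 2 ^ (i + 1) : ℝ) * α ((2 ^ i : ℝ) • ((2:ℝ) • x)) ((2 ^ i : ℝ) • ((2:ℝ) • x))) * α z 0) := by
      rw [Finset.sum_mul, Finset.sum_mul, Finset.mul_sum]
      refine Finset.sum_congr rfl fun i _ => ?_
      rw [smul_smul, show ((2:ℝ) ^ i * 2) = 2 ^ (i+1) by ring]
      ring
    rw [add_mul, hsum]
    have h2 : (1/2:ℝ) * ρ v ≤ (1/2) * (α x x * α z 0) := by linarith
    have h1 : (1/2:ℝ) * ρ u ≤ (1/2) * ((∑ i ∈ Finset.range k,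
        (1 / 2 ^ (i + 1) : ℝ) * α ((2 ^ i : ℝ) • ((2:ℝ) • x)) ((2 ^ i : ℝ) • ((2:ℝ) • x))) * α z 0) := by
      linarith
    have h3 : (1 / 2 ^ (0+1) : ℝ) * α ((2 ^ 0 : ℝ) • x) ((2 ^ 0 : ℝ) • x) * α z 0
        = (1/2) * (α x x * α z 0) := by
      norm_num [mul_assoc]
    linarith
end

section
/- Let X be a vector space, Y_ρ a ρ-complete convex modular space, α: X × X → [0,∞) with ∑_{j=1}^∞ 2^{−j} α(2^{j−1}x, 2^{j−1}y) < ∞ for all x,y, and φ: X × X → Y_ρ with φ(x,0) = φ(0,z) = 0 and ρ(φ(x+y,z+w) + φ(x−y,z−w) − 2φ(x,z) − 2φ(x,w)) ≤ α(x,y)α(z,w). Then for each x,z ∈ X, the sequence {φ(2ⁿx, z)/2ⁿ} is ρ-Cauchy in Y_ρ, i.e., ρ(φ(2ⁿx,z)/2ⁿ − φ(2ᵐx,z)/2ᵐ) → 0 as m,n → ∞. -/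
open Filter Finset

-- Jensen-type inequality for a convex modular: finite convex-ish combinations
lemma jensen_modular {Y : Type*} [AddCommGroup Y] [Module ℝ Y] (ρ : Y → ℝ)
    (hρ0 : ρ 0 = 0)
    (hconv2 : ∀ (a b : ℝ) (u v : Y), 0 ≤ a → 0 ≤ b → a + b ≤ 1 →
      ρ (a • u + b • v) ≤ a * ρ u + b * ρ v) :
    ∀ (s : Finset ℕ) (lam : ℕ → ℝ) (v : ℕ → Y), (∀ j ∈ s, 0 ≤ lam j) →
      (∑ j ∈ s, lam j) ≤ 1 → ρ (∑ j ∈ s, lam j • v j) ≤ ∑ j ∈ s, lam j * ρ (v j) := by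
  intro s
  induction s using Finset.induction_on with
  | empty => intro lam v _ _; simp [hρ0]
  | insert a s ha ih =>
    intro lam v hpos hle
    rw [Finset.sum_insert ha, Finset.sum_insert ha]
    rw [Finset.sum_insert ha] at hle
    set b : ℝ := ∑ j ∈ s, lam j with hb
    have hbpos : 0 ≤ b := Finset.sum_nonneg fun j hj => hpos j (Finset.mem_insert_of_mem hj)
    have hlama : 0 ≤ lam a := hpos a (Finset.mem_insert_self a s)
    rcases eq_or_lt_of_le hbpos with hb0 | hb0
    · -- tail sum of coefficients is zero
      have hz : ∀ j ∈ s, lam j = 0 := by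
        have := (Finset.sum_eq_zero_iff_of_nonneg
          (fun j hj => hpos j (Finset.mem_insert_of_mem hj))).1 hb0.symm
        exact this
      have h1 : (∑ j ∈ s, lam j • v j) = 0 :=
        Finset.sum_eq_zero fun j hj => by rw [hz j hj, zero_smul]
      have h2 : (∑ j ∈ s, lam j * ρ (v j)) = 0 :=
        Finset.sum_eq_zero fun j hj => by rw [hz j hj, zero_mul]
      rw [h1, h2, add_zero, add_zero]
      have := hconv2 (lam a) 0 (v a) 0 hlama le_rfl (by linarith)
      simpa [hρ0] using this
    · -- positive tail: normalize
      set w : Y := b⁻¹ • ∑ j ∈ s, lam j • v j with hw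
      have hbw : b • w = ∑ j ∈ s, lam j • v j := by
        rw [hw, smul_smul, mul_inv_cancel₀ (ne_of_gt hb0), one_smul]
      have hmain : ρ (lam a • v a + b • w) ≤ lam a * ρ (v a) + b * ρ w :=
        hconv2 (lam a) b (v a) w hlama hbpos hle
      rw [hbw] at hmain
      have hwρ : ρ w ≤ ∑ j ∈ s, (b⁻¹ * lam j) * ρ (v j) := by
        have hweq : w = ∑ j ∈ s, (b⁻¹ * lam j) • v j := by
          rw [hw, Finset.smul_sum]
          exact Finset.sum_congr rfl fun j _ => smul_smul _ _ _
        rw [hweq]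
        refine ih (fun j => b⁻¹ * lam j) v
          (fun j hj => mul_nonneg (inv_nonneg.2 hbpos)
            (hpos j (Finset.mem_insert_of_mem hj))) ?_
        rw [← Finset.mul_sum, ← hb, inv_mul_cancel₀ (ne_of_gt hb0)]
      calc ρ (lam a • v a + ∑ j ∈ s, lam j • v j) ≤ lam a * ρ (v a) + b * ρ w := hmain
        _ ≤ lam a * ρ (v a) + b * ∑ j ∈ s, (b⁻¹ * lam j) * ρ (v j) := by
            have := mul_le_mul_of_nonneg_left hwρ hbpos
            linarith
        _ = lam a * ρ (v a) + ∑ j ∈ s, lam j * ρ (v j) := by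
            rw [Finset.mul_sum]
            congr 1
            refine Finset.sum_congr rfl fun j _ => ?_
            field_simp

theorem stmt10 {X Y : Type*} [AddCommGroup X] [Module ℝ X] [AddCommGroup Y] [Module ℝ Y]
    (ρ : Y → ℝ) (α : X → X → ℝ) (φ : X → X → Y)
    (hzero : ∀ u : Y, ρ u = 0 ↔ u = 0)
    (hnonneg : ∀ u : Y, 0 ≤ ρ u)
    (hsym : ∀ (a : ℝ) (u : Y), |a| = 1 → ρ (a • u) = ρ u)
    (hconv : ∀ (a b : ℝ) (u v : Y), 0 ≤ a → 0 ≤ b → a + b = 1 →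
      ρ (a • u + b • v) ≤ a * ρ u + b * ρ v)
    (hα : ∀ x y, 0 ≤ α x y)
    (hsum : ∀ x y : X,
      Summable (fun j : ℕ => (1 / 2 ^ (j + 1) : ℝ) * α ((2 ^ j : ℝ) • x) ((2 ^ j : ℝ) • y)))
    (hzeroL : ∀ z : X, φ 0 z = 0) (hzeroR : ∀ x : X, φ x 0 = 0)
    (hineq : ∀ x y z w : X,
      ρ (φ (x + y) (z + w) + φ (x - y) (z - w) - 2 • φ x z - 2 • φ x w) ≤
        α x y * α z w) :
    ∀ x z : X,
      Filter.Tendsto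
        (fun p : ℕ × ℕ =>
          ρ ((1 / 2 ^ p.1 : ℝ) • φ ((2 ^ p.1 : ℝ) • x) z -
              (1 / 2 ^ p.2 : ℝ) • φ ((2 ^ p.2 : ℝ) • x) z))
        Filter.atTop (nhds 0) := by
  intro x z
  have hρ0 : ρ 0 = 0 := (hzero 0).2 rfl
  have hρneg : ∀ u : Y, ρ (-u) = ρ u := fun u => by
    have := hsym (-1) u (by norm_num); simpa using this
  -- two-point convexity with a + b ≤ 1
  have hconv2 : ∀ (a b : ℝ) (u v : Y), 0 ≤ a → 0 ≤ b → a + b ≤ 1 →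
      ρ (a • u + b • v) ≤ a * ρ u + b * ρ v := by
    intro a b u v ha hb hab
    rcases eq_or_lt_of_le (add_nonneg ha hb) with hs0 | hs0
    · have ha0 : a = 0 := by linarith
      have hb0 : b = 0 := by linarith
      simp [ha0, hb0, hρ0]
    · set s : ℝ := a + b with hs
      set w : Y := (a / s) • u + (b / s) • v with hw
      have hsw : s • w = a • u + b • v := by
        rw [hw, smul_add, smul_smul, smul_smul]
        rw [mul_div_cancel₀ _ (ne_of_gt hs0), mul_div_cancel₀ _ (ne_of_gt hs0)]
      have h1 : ρ (s • w) ≤ s * ρ w := by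
        have := hconv s (1 - s) w 0 (le_of_lt hs0) (by linarith) (by ring)
        simpa [hρ0] using this
      have h2 : ρ w ≤ (a / s) * ρ u + (b / s) * ρ v := by
        refine hconv (a / s) (b / s) u v (div_nonneg ha (le_of_lt hs0))
          (div_nonneg hb (le_of_lt hs0)) ?_
        field_simp
        exact hs.symm
      calc ρ (a • u + b • v) = ρ (s • w) := by rw [hsw]
        _ ≤ s * ρ w := h1
        _ ≤ s * ((a / s) * ρ u + (b / s) * ρ v) :=
            mul_le_mul_of_nonneg_left h2 (le_of_lt hs0)
        _ = a * ρ u + b * ρ v := by field_simp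
  -- notation
  set u : ℕ → Y := fun n => (1 / 2 ^ n : ℝ) • φ ((2 ^ n : ℝ) • x) z with hu
  set g : ℕ → ℝ := fun j => (1 / 2 ^ (j + 1) : ℝ) * α ((2 ^ j : ℝ) • x) ((2 ^ j : ℝ) • x)
    with hgdef
  have hg : Summable g := hsum x x
  have hgpos : ∀ j, 0 ≤ g j := fun j =>
    mul_nonneg (by positivity) (hα _ _)
  -- single-step estimate
  have step : ∀ j : ℕ,
      ρ (φ ((2 ^ (j + 1) : ℝ) • x) z - 2 • φ ((2 ^ j : ℝ) • x) z) ≤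
        α ((2 ^ j : ℝ) • x) ((2 ^ j : ℝ) • x) * α z 0 := by
    intro j
    have h := hineq ((2 ^ j : ℝ) • x) ((2 ^ j : ℝ) • x) z 0
    have hxx : (2 ^ j : ℝ) • x + (2 ^ j : ℝ) • x = (2 ^ (j + 1) : ℝ) • x := by
      rw [← add_smul]; ring_nf
    rw [hxx] at h
    simpa [hzeroL, hzeroR, sub_self] using h
  -- telescoping identity
  have hterm : ∀ j : ℕ,
      (1 / 2 ^ (j + 1) : ℝ) • (φ ((2 ^ (j + 1) : ℝ) • x) z - 2 • φ ((2 ^ j : ℝ) • x) z) =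
        u (j + 1) - u j := by
    intro j
    have h2 : (2 : ℕ) • φ ((2 ^ j : ℝ) • x) z = (2 : ℝ) • φ ((2 ^ j : ℝ) • x) z := by
      simp [two_smul]
    rw [smul_sub, h2, smul_smul, hu]
    have hc : (1 / 2 ^ (j + 1) : ℝ) * 2 = 1 / 2 ^ j := by
      rw [pow_succ]; field_simp
    rw [hc]
  have htel : ∀ m n : ℕ, m ≤ n →
      u n - u m = ∑ j ∈ Finset.Ico m n,
        (1 / 2 ^ (j + 1) : ℝ) • (φ ((2 ^ (j + 1) : ℝ) • x) z - 2 • φ ((2 ^ j : ℝ) • x) z) := by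
    intro m n hmn
    have : (∑ j ∈ Finset.Ico m n, (u (j + 1) - u j)) = u n - u m := by
      rw [Finset.sum_Ico_eq_sub _ hmn, Finset.sum_range_sub, Finset.sum_range_sub]
      abel
    rw [← this]
    exact Finset.sum_congr rfl fun j _ => (hterm j).symm
  -- coefficients sum to at most 1
  have hcoef : ∀ n : ℕ, (∑ j ∈ Finset.range n, (1 / 2 ^ (j + 1) : ℝ)) = 1 - 1 / 2 ^ n := by
    intro n
    induction n with
    | zero => simp
    | succ n ih => rw [Finset.sum_range_succ, ih, pow_succ]; field_simp; ring
  have hcoefle : ∀ m n : ℕ, (∑ j ∈ Finset.Ico m n, (1 / 2 ^ (j + 1) : ℝ)) ≤ 1 := by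
    intro m n
    calc (∑ j ∈ Finset.Ico m n, (1 / 2 ^ (j + 1) : ℝ))
        ≤ ∑ j ∈ Finset.range n, (1 / 2 ^ (j + 1) : ℝ) :=
          Finset.sum_le_sum_of_subset_of_nonneg
            (by intro j hj; simp at hj ⊢; omega)
            (fun j _ _ => by positivity)
      _ = 1 - 1 / 2 ^ n := hcoef n
      _ ≤ 1 := by have : (0:ℝ) < 1 / 2 ^ n := by positivity
                  linarith
  -- key estimate
  have key : ∀ m n : ℕ, m ≤ n →
      ρ (u n - u m) ≤ (∑ j ∈ Finset.Ico m n, g j) * α z 0 := by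
    intro m n hmn
    rw [htel m n hmn]
    calc ρ (∑ j ∈ Finset.Ico m n,
            (1 / 2 ^ (j + 1) : ℝ) • (φ ((2 ^ (j + 1) : ℝ) • x) z - 2 • φ ((2 ^ j : ℝ) • x) z))
        ≤ ∑ j ∈ Finset.Ico m n, (1 / 2 ^ (j + 1) : ℝ) *
            ρ (φ ((2 ^ (j + 1) : ℝ) • x) z - 2 • φ ((2 ^ j : ℝ) • x) z) :=
          jensen_modular ρ hρ0 hconv2 _ _ _ (fun j _ => by positivity) (hcoefle m n)
      _ ≤ ∑ j ∈ Finset.Ico m n, g j * α z 0 := by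
          refine Finset.sum_le_sum fun j _ => ?_
          rw [hgdef, mul_assoc]
          exact mul_le_mul_of_nonneg_left (step j) (by positivity)
      _ = (∑ j ∈ Finset.Ico m n, g j) * α z 0 := by rw [Finset.sum_mul]
  -- tail bound
  have tailbound : ∀ m n : ℕ, m ≤ n →
      (∑ j ∈ Finset.Ico m n, g j) ≤ ∑' j, g (j + m) := by
    intro m n hmn
    rw [Finset.sum_Ico_eq_sum_range]
    have hsh : Summable fun j => g (j + m) := (summable_nat_add_iff m).2 hg
    calc (∑ j ∈ Finset.range (n - m), g (m + j))
        = ∑ j ∈ Finset.range (n - m), g (j + m) := by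
          refine Finset.sum_congr rfl fun j _ => by rw [add_comm]
      _ ≤ ∑' j, g (j + m) := Summable.sum_le_tsum _ (fun j _ => hgpos _) hsh
  set T : ℕ → ℝ := fun m => (∑' j, g (j + m)) * α z 0 with hT
  have hTend : Tendsto T atTop (nhds 0) := by
    have := (tendsto_sum_nat_add g).mul_const (α z 0)
    simpa [hT] using this
  have hbound : ∀ p : ℕ × ℕ, ρ (u p.1 - u p.2) ≤ T (min p.1 p.2) := by
    intro ⟨n, m⟩
    simp only
    rcases le_total m n with hmn | hnm
    · have h1 := key m n hmn
      have h2 := tailbound m n hmn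
      rw [min_comm, min_eq_left hmn]
      calc ρ (u n - u m) ≤ (∑ j ∈ Finset.Ico m n, g j) * α z 0 := h1
        _ ≤ T m := mul_le_mul_of_nonneg_right h2 (hα _ _)
    · have h1 := key n m hnm
      have h2 := tailbound n m hnm
      rw [min_eq_left hnm]
      have hswap : ρ (u n - u m) = ρ (u m - u n) := by
        rw [← hρneg (u m - u n)]; congr 1; abel
      rw [hswap]
      calc ρ (u m - u n) ≤ (∑ j ∈ Finset.Ico n m, g j) * α z 0 := h1
        _ ≤ T n := mul_le_mul_of_nonneg_right h2 (hα _ _)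
  have hmin : Tendsto (fun p : ℕ × ℕ => min p.1 p.2) atTop atTop := by
    rw [← prod_atTop_atTop_eq]
    refine tendsto_atTop.2 fun b => ?_
    filter_upwards [(tendsto_fst.eventually_ge_atTop b), (tendsto_snd.eventually_ge_atTop b)]
      with p h1 h2
    exact le_min h1 h2
  refine squeeze_zero (fun p => hnonneg _) hbound ?_
  exact hTend.comp hmin
end

section
/- Let X be a vector space, Y_ρ a ρ-complete convex modular space, α: X × X → [0,∞) with ψ(x,y) := ∑_{j=1}^∞ 4^{−j} α(2^{j−1}x, 2^{j−1}y) < ∞ for all x,y, and φ: X × X → Y_ρ with φ(x,0) = φ(0,z) = 0 and ρ(φ(x+y,z+w) + φ(x−y,z−w) − 2φ(x,z) − 2φ(x,w)) ≤ α(x,y)α(z,w). Then for each x,z ∈ X, the sequence {φ(x, 2ⁿz)/4ⁿ} is ρ-Cauchy in Y_ρ. -/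
open Filter Finset

theorem stmt11 {X Y : Type*} [AddCommGroup X] [Module ℝ X] [AddCommGroup Y] [Module ℝ Y]
    (ρ : Y → ℝ) (α : X → X → ℝ) (φ : X → X → Y)
    (hzero : ∀ u : Y, ρ u = 0 ↔ u = 0)
    (hnonneg : ∀ u : Y, 0 ≤ ρ u)
    (hsym : ∀ (a : ℝ) (u : Y), |a| = 1 → ρ (a • u) = ρ u)
    (hconv : ∀ (a b : ℝ) (u v : Y), 0 ≤ a → 0 ≤ b → a + b = 1 →
      ρ (a • u + b • v) ≤ a * ρ u + b * ρ v)
    (hα : ∀ x y, 0 ≤ α x y)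
    (hsum : ∀ x y : X,
      Summable (fun j : ℕ => (1 / 4 ^ (j + 1) : ℝ) * α ((2 ^ j : ℝ) • x) ((2 ^ j : ℝ) • y)))
    (hzeroL : ∀ z : X, φ 0 z = 0) (hzeroR : ∀ x : X, φ x 0 = 0)
    (hineq : ∀ x y z w : X,
      ρ (φ (x + y) (z + w) + φ (x - y) (z - w) - 2 • φ x z - 2 • φ x w) ≤
        α x y * α z w) :
    ∀ x z : X,
      Filter.Tendsto
        (fun p : ℕ × ℕ =>
          ρ ((1 / 4 ^ p.1 : ℝ) • φ x ((2 ^ p.1 : ℝ) • z) -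
              (1 / 4 ^ p.2 : ℝ) • φ x ((2 ^ p.2 : ℝ) • z)))
        Filter.atTop (nhds 0) := by
  have hρ0 : ρ 0 = 0 := (hzero 0).mpr rfl
  -- subhomogeneity
  have hA : ∀ (a : ℝ) (u : Y), 0 ≤ a → a ≤ 1 → ρ (a • u) ≤ a * ρ u := by
    intro a u ha ha1
    have h := hconv a (1 - a) u 0 ha (by linarith) (by ring)
    simpa [hρ0] using h
  -- binary subconvexity
  have hC : ∀ (a b : ℝ) (u v : Y), 0 ≤ a → 0 ≤ b → a + b ≤ 1 →
      ρ (a • u + b • v) ≤ a * ρ u + b * ρ v := by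
    intro a b u v ha hb hab
    rcases eq_or_lt_of_le (add_nonneg ha hb) with h0 | h0
    · have ha0 : a = 0 := by linarith
      have hb0 : b = 0 := by linarith
      simp [ha0, hb0, hρ0]
    · set t := a + b with ht
      have h1 : a • u + b • v = t • ((a / t) • u + (b / t) • v) := by
        rw [smul_add, smul_smul, smul_smul]
        rw [mul_div_cancel₀ _ (ne_of_gt h0), mul_div_cancel₀ _ (ne_of_gt h0)]
      rw [h1]
      calc ρ (t • ((a / t) • u + (b / t) • v)) ≤ t * ρ ((a / t) • u + (b / t) • v) :=
            hA t _ (le_of_lt h0) hab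
        _ ≤ t * ((a / t) * ρ u + (b / t) * ρ v) := by
            apply mul_le_mul_of_nonneg_left _ (le_of_lt h0)
            exact hconv _ _ _ _ (div_nonneg ha (le_of_lt h0)) (div_nonneg hb (le_of_lt h0))
              (by field_simp; exact ht.symm)
        _ = a * ρ u + b * ρ v := by field_simp
  -- finite subconvex combinations
  have hS : ∀ (n : ℕ) (c : ℕ → ℝ) (w : ℕ → Y), (∀ k, 0 ≤ c k) →
      (∑ k ∈ Finset.range n, c k) ≤ 1 →
      ρ (∑ k ∈ Finset.range n, c k • w k) ≤ ∑ k ∈ Finset.range n, c k * ρ (w k) := by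
    intro n
    induction n with
    | zero => intro c w _ _; simp [hρ0]
    | succ n ih =>
      intro c w hc hsum1
      rw [Finset.sum_range_succ, Finset.sum_range_succ]
      rw [Finset.sum_range_succ] at hsum1
      set b := ∑ k ∈ Finset.range n, c k with hb
      have hbnn : 0 ≤ b := Finset.sum_nonneg fun k _ => hc k
      rcases eq_or_lt_of_le hbnn with h0 | h0
      · have hck : ∀ k ∈ Finset.range n, c k = 0 :=
          (Finset.sum_eq_zero_iff_of_nonneg (fun k _ => hc k)).mp h0.symm
        have h1 : (∑ k ∈ Finset.range n, c k • w k) = 0 :=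
          Finset.sum_eq_zero fun k hk => by rw [hck k hk, zero_smul]
        have h2 : (∑ k ∈ Finset.range n, c k * ρ (w k)) = 0 :=
          Finset.sum_eq_zero fun k hk => by rw [hck k hk, zero_mul]
        rw [h1, h2, zero_add, zero_add]
        exact hA _ _ (hc n) (by linarith)
      · have hne : b ≠ 0 := ne_of_gt h0
        have hsum' : (∑ k ∈ Finset.range n, c k / b) ≤ 1 := by
          rw [← Finset.sum_div, ← hb, div_le_one h0]
        have key := ih (fun k => c k / b) w (fun k => div_nonneg (hc k) hbnn) hsum'
        have hrw : (b • ∑ k ∈ Finset.range n, (c k / b) • w k) =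
            ∑ k ∈ Finset.range n, c k • w k := by
          rw [Finset.smul_sum]
          refine Finset.sum_congr rfl fun k _ => ?_
          rw [smul_smul, mul_div_cancel₀ _ hne]
        calc ρ (∑ k ∈ Finset.range n, c k • w k + c n • w n)
            = ρ (c n • w n + b • ∑ k ∈ Finset.range n, (c k / b) • w k) := by
              rw [hrw, add_comm]
          _ ≤ c n * ρ (w n) + b * ρ (∑ k ∈ Finset.range n, (c k / b) • w k) :=
              hC _ _ _ _ (hc n) hbnn (by linarith)
          _ ≤ c n * ρ (w n) + b * ∑ k ∈ Finset.range n, (c k / b) * ρ (w k) := by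
              exact add_le_add_right (mul_le_mul_of_nonneg_left key hbnn) _
          _ = ∑ k ∈ Finset.range n, c k * ρ (w k) + c n * ρ (w n) := by
              rw [Finset.mul_sum, add_comm]
              congr 1
              refine Finset.sum_congr rfl fun k _ => ?_
              field_simp
  intro x z
  set u : ℕ → Y := fun n => (1 / 4 ^ n : ℝ) • φ x ((2 ^ n : ℝ) • z) with hu
  set w : ℕ → Y := fun k => φ x ((2 ^ (k + 1) : ℝ) • z) - (4 : ℝ) • φ x ((2 ^ k : ℝ) • z)
    with hwdef
  set g : ℕ → ℝ := fun j => (1 / 4 ^ (j + 1) : ℝ) * α ((2 ^ j : ℝ) • z) ((2 ^ j : ℝ) • z)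
    with hg
  have hgsummable : Summable g := hsum z z
  have hgnn : ∀ j, 0 ≤ g j := fun j =>
    mul_nonneg (by positivity) (hα _ _)
  -- bound on ρ (w k)
  have hw : ∀ k : ℕ, ρ (w k) ≤ α x 0 * α ((2 ^ k : ℝ) • z) ((2 ^ k : ℝ) • z) := by
    intro k
    have h := hineq x 0 ((2 ^ k : ℝ) • z) ((2 ^ k : ℝ) • z)
    have e2 : (2 ^ k : ℝ) • z + (2 ^ k : ℝ) • z = (2 ^ (k + 1) : ℝ) • z := by
      rw [← add_smul]; congr 1; rw [pow_succ]; ring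
    have heq : φ (x + 0) ((2 ^ k : ℝ) • z + (2 ^ k : ℝ) • z) +
        φ (x - 0) ((2 ^ k : ℝ) • z - (2 ^ k : ℝ) • z) -
        2 • φ x ((2 ^ k : ℝ) • z) - 2 • φ x ((2 ^ k : ℝ) • z) = w k := by
      rw [add_zero, sub_zero, sub_self, hzeroR, e2, hwdef]
      rw [← Nat.cast_smul_eq_nsmul ℝ]
      push_cast
      module
    rw [heq] at h
    exact h
  -- telescoping step
  have hscal : ∀ k : ℕ, (1 / 4 ^ k : ℝ) = (1 / 4 ^ (k + 1)) * 4 := by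
    intro k
    rw [pow_succ]
    field_simp
  have htel : ∀ k : ℕ, u (k + 1) - u k = (1 / 4 ^ (k + 1) : ℝ) • w k := by
    intro k
    rw [hu, hwdef]
    simp only [smul_sub, smul_smul]
    rw [← hscal]
  -- main estimate for m ≤ n
  have hcle : ∀ (N m : ℕ), (∑ i ∈ Finset.range N, (1 / 4 ^ (m + i + 1) : ℝ)) ≤ 1 := by
    intro N m
    calc (∑ i ∈ Finset.range N, (1 / 4 ^ (m + i + 1) : ℝ))
        ≤ ∑ i ∈ Finset.range N, (1 / 2) * (1 / 2 : ℝ) ^ i := by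
          refine Finset.sum_le_sum fun i _ => ?_
          rw [← pow_succ', ← one_div_pow]
          calc ((1 : ℝ) / 4) ^ (m + i + 1) ≤ (1 / 4) ^ (i + 1) :=
                pow_le_pow_of_le_one (by norm_num) (by norm_num) (by omega)
            _ ≤ (1 / 2) ^ (i + 1) := pow_le_pow_left₀ (by norm_num) (by norm_num) _
      _ = (1 / 2) * ∑ i ∈ Finset.range N, (1 / 2 : ℝ) ^ i := by rw [Finset.mul_sum]
      _ ≤ (1 / 2) * 2 := by
          apply mul_le_mul_of_nonneg_left _ (by norm_num)
          exact sum_geometric_two_le N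
      _ = 1 := by norm_num
  have hmain : ∀ m n : ℕ, m ≤ n → ρ (u n - u m) ≤ α x 0 * ∑' i, g (i + m) := by
    intro m n hmn
    have htel2 : u n - u m =
        ∑ i ∈ Finset.range (n - m), (1 / 4 ^ (m + i + 1) : ℝ) • w (m + i) := by
      have h := Finset.sum_range_sub (fun i => u (m + i)) (n - m)
      rw [Nat.add_sub_cancel' hmn] at h
      simp only [Nat.add_zero] at h
      rw [← h]
      refine Finset.sum_congr rfl fun i _ => ?_
      have : m + (i + 1) = (m + i) + 1 := by omega
      rw [this, htel (m + i)]
    rw [htel2]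
    have hsummable' : Summable (fun i => g (i + m)) := (summable_nat_add_iff m).mpr hgsummable
    calc ρ (∑ i ∈ Finset.range (n - m), (1 / 4 ^ (m + i + 1) : ℝ) • w (m + i))
        ≤ ∑ i ∈ Finset.range (n - m), (1 / 4 ^ (m + i + 1) : ℝ) * ρ (w (m + i)) :=
          hS (n - m) _ _ (fun k => by positivity) (hcle _ m)
      _ ≤ ∑ i ∈ Finset.range (n - m), α x 0 * g (i + m) := by
          refine Finset.sum_le_sum fun i _ => ?_
          have h1 := hw (m + i)
          have h2 : (0 : ℝ) ≤ 1 / 4 ^ (m + i + 1) := by positivity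
          calc (1 / 4 ^ (m + i + 1) : ℝ) * ρ (w (m + i))
              ≤ (1 / 4 ^ (m + i + 1) : ℝ) *
                (α x 0 * α ((2 ^ (m + i) : ℝ) • z) ((2 ^ (m + i) : ℝ) • z)) :=
                mul_le_mul_of_nonneg_left h1 h2
            _ = α x 0 * g (i + m) := by
                rw [hg]
                have : i + m = m + i := by omega
                rw [this]
                ring
      _ = α x 0 * ∑ i ∈ Finset.range (n - m), g (i + m) := by rw [Finset.mul_sum]
      _ ≤ α x 0 * ∑' i, g (i + m) := by
          apply mul_le_mul_of_nonneg_left _ (hα x 0)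
          exact Summable.sum_le_tsum _ (fun i _ => hgnn _) hsummable'
  -- symmetric bound
  have hbound : ∀ p : ℕ × ℕ, ρ (u p.1 - u p.2) ≤ α x 0 * ∑' i, g (i + min p.1 p.2) := by
    intro p
    rcases le_total p.1 p.2 with h | h
    · have hmin : min p.1 p.2 = p.1 := min_eq_left h
      rw [hmin]
      have hneg : u p.1 - u p.2 = (-1 : ℝ) • (u p.2 - u p.1) := by module
      rw [hneg, hsym (-1) _ (by norm_num)]
      exact hmain p.1 p.2 h
    · have hmin : min p.1 p.2 = p.2 := min_eq_right h
      rw [hmin]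
      exact hmain p.2 p.1 h
  -- limit of tails
  have htail : Tendsto (fun m : ℕ => α x 0 * ∑' i, g (i + m)) atTop (nhds 0) := by
    have := (tendsto_sum_nat_add g).const_mul (α x 0)
    simpa using this
  have hminT : Tendsto (fun p : ℕ × ℕ => min p.1 p.2) atTop atTop := by
    apply tendsto_atTop_atTop.mpr
    intro b
    refine ⟨(b, b), fun p hp => ?_⟩
    have h1 : b ≤ p.1 := hp.1
    have h2 : b ≤ p.2 := hp.2
    exact le_min h1 h2
  have hcomp : Tendsto (fun p : ℕ × ℕ => α x 0 * ∑' i, g (i + min p.1 p.2)) atTop (nhds 0) :=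
    htail.comp hminT
  exact squeeze_zero (fun p => hnonneg _) hbound hcomp
end

section
/- Let X be a vector space and Y_ρ a ρ-complete convex modular space satisfying the Fatou property. Let α: X × X → [0,∞) satisfy φ̃(x,y) := ∑_{j≥1} 2^{−j}α(2^{j−1}x, 2^{j−1}y) < ∞ and ψ(x,y) := ∑_{j≥1} 4^{−j}α(2^{j−1}x, 2^{j−1}y) < ∞ for all x,y. Suppose φ: X × X → Y_ρ satisfies φ(x,0) = φ(0,z) = 0 and ρ(φ(x+y,z+w) + φ(x−y,z−w) − 2φ(x,z) − 2φ(x,w)) ≤ α(x,y)α(z,w) for all x,y,z,w. Then there exists a unique mapping H: X × X → Y_ρ, additive in the first variable and quadratic in the second variable, such that ρ(φ(x,z) − H(x,z)) ≤ min{φ̃(x,x)α(z,0), α(x,0)ψ(z,z)} for all x,z ∈ X. -/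
open Filter

section Modular

variable {Y : Type*} [AddCommGroup Y] [Module ℝ Y] (ρ : Y → ℝ)

lemma mod_zero' (hzero : ∀ u : Y, ρ u = 0 ↔ u = 0) : ρ 0 = 0 := (hzero 0).2 rfl

lemma mod_neg (hsym : ∀ (a : ℝ) (u : Y), |a| = 1 → ρ (a • u) = ρ u) (u : Y) :
    ρ (-u) = ρ u := by
  have := hsym (-1) u (by norm_num)
  simpa using this

lemma mod_smul_le (hzero : ∀ u : Y, ρ u = 0 ↔ u = 0)
    (hconv : ∀ (a b : ℝ) (u v : Y), 0 ≤ a → 0 ≤ b → a + b = 1 →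
      ρ (a • u + b • v) ≤ a * ρ u + b * ρ v)
    {a : ℝ} (ha0 : 0 ≤ a) (ha1 : a ≤ 1) (u : Y) : ρ (a • u) ≤ a * ρ u := by
  have h := hconv a (1 - a) u 0 ha0 (by linarith) (by ring)
  simpa [mod_zero' ρ hzero] using h

lemma mod_jensen (hzero : ∀ u : Y, ρ u = 0 ↔ u = 0)
    (hconv : ∀ (a b : ℝ) (u v : Y), 0 ≤ a → 0 ≤ b → a + b = 1 →
      ρ (a • u + b • v) ≤ a * ρ u + b * ρ v)
    (s : Finset ℕ) (c : ℕ → ℝ) (v : ℕ → Y) (hc : ∀ j, 0 ≤ c j)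
    (hsum : (∑ j ∈ s, c j) ≤ 1) :
    ρ (∑ j ∈ s, c j • v j) ≤ ∑ j ∈ s, c j * ρ (v j) := by
  induction s using Finset.cons_induction generalizing c with
  | empty => simp [mod_zero' ρ hzero]
  | cons a t ha ih =>
    rw [Finset.sum_cons] at hsum ⊢
    rw [Finset.sum_cons]
    have hC0 : 0 ≤ ∑ j ∈ t, c j := Finset.sum_nonneg fun j _ => hc j
    rcases eq_or_lt_of_le hC0 with h0 | hpos
    · have hz : ∀ j ∈ t, c j • v j = (0:Y) := by
        intro j hj
        have : c j = 0 := (Finset.sum_eq_zero_iff_of_nonneg (fun j _ => hc j)).1 h0.symm j hj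
        simp [this]
      rw [Finset.sum_eq_zero hz, add_zero]
      have h1 : c a ≤ 1 := by linarith
      have h2 : 0 ≤ ∑ j ∈ t, c j * ρ (v j) :=
        Finset.sum_nonneg fun j hj => by
          have : c j = 0 := (Finset.sum_eq_zero_iff_of_nonneg (fun j _ => hc j)).1 h0.symm j hj
          simp [this]
      have := mod_smul_le ρ hzero hconv (hc a) h1 (v a)
      linarith
    · set b : ℝ := 1 - c a with hbdef
      have hCb : ∑ j ∈ t, c j ≤ b := by linarith
      have hb : 0 < b := lt_of_lt_of_le hpos hCb
      have key := hconv (c a) b (v a) (b⁻¹ • ∑ j ∈ t, c j • v j) (hc a) hb.le (by ring)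
      rw [smul_inv_smul₀ (ne_of_gt hb)] at key
      have h2 : ρ (b⁻¹ • ∑ j ∈ t, c j • v j) ≤ ∑ j ∈ t, (b⁻¹ * c j) * ρ (v j) := by
        rw [Finset.smul_sum]
        simp_rw [smul_smul]
        apply ih (fun j => b⁻¹ * c j) (fun j => mul_nonneg (inv_nonneg.2 hb.le) (hc j))
        rw [← Finset.mul_sum]
        rw [inv_mul_le_iff₀ hb, mul_one]
        exact hCb
      have h3 : b * ∑ j ∈ t, (b⁻¹ * c j) * ρ (v j) = ∑ j ∈ t, c j * ρ (v j) := by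
        rw [Finset.mul_sum]
        refine Finset.sum_congr rfl fun j _ => ?_
        field_simp
      calc ρ (c a • v a + ∑ j ∈ t, c j • v j)
          ≤ c a * ρ (v a) + b * ρ (b⁻¹ • ∑ j ∈ t, c j • v j) := key
        _ ≤ c a * ρ (v a) + b * ∑ j ∈ t, (b⁻¹ * c j) * ρ (v j) := by nlinarith [hb.le]
        _ = c a * ρ (v a) + ∑ j ∈ t, c j * ρ (v j) := by rw [h3]

lemma mod_lim_unique (hzero : ∀ u : Y, ρ u = 0 ↔ u = 0)
    (hnonneg : ∀ u : Y, 0 ≤ ρ u)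
    (hsym : ∀ (a : ℝ) (u : Y), |a| = 1 → ρ (a • u) = ρ u)
    (hconv : ∀ (a b : ℝ) (u v : Y), 0 ≤ a → 0 ≤ b → a + b = 1 →
      ρ (a • u + b • v) ≤ a * ρ u + b * ρ v)
    (a : ℕ → Y) (l l' : Y)
    (h1 : Tendsto (fun n => ρ (a n - l)) atTop (nhds 0))
    (h2 : Tendsto (fun n => ρ (a n - l')) atTop (nhds 0)) : l = l' := by
  have hb : ∀ n, ρ ((1/2:ℝ) • (l - l')) ≤ (1/2) * ρ (a n - l) + (1/2) * ρ (a n - l') := by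
    intro n
    have h := hconv (1/2) (1/2) (l - a n) (a n - l') (by norm_num) (by norm_num) (by norm_num)
    have e : (1/2:ℝ) • (l - a n) + (1/2:ℝ) • (a n - l') = (1/2:ℝ) • (l - l') := by module
    rw [e] at h
    have e2 : ρ (l - a n) = ρ (a n - l) := by rw [← mod_neg ρ hsym, neg_sub]
    rw [e2] at h
    exact h
  have hlim : Tendsto (fun n => (1/2) * ρ (a n - l) + (1/2) * ρ (a n - l'))
      atTop (nhds 0) := by
    have := (h1.const_mul (1/2:ℝ)).add (h2.const_mul (1/2:ℝ))
    simpa using this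
  have hle : ρ ((1/2:ℝ) • (l - l')) ≤ 0 := ge_of_tendsto' hlim hb
  have h0 : ρ ((1/2:ℝ) • (l - l')) = 0 := le_antisymm hle (hnonneg _)
  have := (hzero _).1 h0
  rcases smul_eq_zero.1 this with h | h
  · norm_num at h
  · exact sub_eq_zero.1 h

lemma mod_key (hzero : ∀ u : Y, ρ u = 0 ↔ u = 0)
    (hnonneg : ∀ u : Y, 0 ≤ ρ u)
    (hsym : ∀ (a : ℝ) (u : Y), |a| = 1 → ρ (a • u) = ρ u)
    (hconv : ∀ (a b : ℝ) (u v : Y), 0 ≤ a → 0 ≤ b → a + b = 1 →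
      ρ (a • u + b • v) ≤ a * ρ u + b * ρ v)
    (hcomplete : ∀ u : ℕ → Y,
      Tendsto (fun p : ℕ × ℕ => ρ (u p.1 - u p.2)) atTop (nhds 0) →
      ∃ l : Y, Tendsto (fun n => ρ (u n - l)) atTop (nhds 0))
    (hFatou : ∀ (u : ℕ → Y) (l : Y),
      Tendsto (fun n => ρ (u n - l)) atTop (nhds 0) →
      ρ l ≤ liminf (fun n => ρ (u n)) atTop)
    (c β : ℕ → ℝ) (d u : ℕ → Y)
    (hc : ∀ j, 0 ≤ c j) (hβ : ∀ j, 0 ≤ β j)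
    (hcs : Summable c) (hc1 : (∑' j, c j) ≤ 1) (hcβ : Summable fun j => c j * β j)
    (hu : ∀ j, u (j+1) = u j + c j • d j) (hd : ∀ j, ρ (d j) ≤ β j) :
    ∃ L : Y, (∀ K : ℝ, 1 ≤ K → Tendsto (fun n => ρ (K • u n - K • L)) atTop (nhds 0)) ∧
      ρ (u 0 - L) ≤ ∑' j, c j * β j := by
  have hcβ' : ∀ j, 0 ≤ c j * β j := fun j => mul_nonneg (hc j) (hβ j)
  have tele : ∀ m n, m ≤ n → u n - u m = ∑ j ∈ Finset.Ico m n, c j • d j := by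
    intro m n h
    induction n, h using Nat.le_induction with
    | base => simp
    | succ n hmn ih =>
      rw [Finset.sum_Ico_succ_top hmn, ← ih, hu n]
      abel
  have sumc : ∀ m n : ℕ, ∑ j ∈ Finset.Ico m n, c j ≤ ∑' j, c (j + m) := by
    intro m n
    rw [Finset.sum_Ico_eq_sum_range]
    simp_rw [Nat.add_comm m]
    exact Summable.sum_le_tsum _ (fun i _ => hc _) ((summable_nat_add_iff m).2 hcs)
  have sumβ : ∀ m n : ℕ, ∑ j ∈ Finset.Ico m n, c j * β j ≤ ∑' j, c (j + m) * β (j + m) := by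
    intro m n
    rw [Finset.sum_Ico_eq_sum_range]
    simp_rw [Nat.add_comm m]
    exact Summable.sum_le_tsum _ (fun i _ => hcβ' _) ((summable_nat_add_iff m).2 hcβ)
  have bnd : ∀ K : ℝ, 0 ≤ K → ∀ m n : ℕ, m ≤ n → K * ∑' j, c (j + m) ≤ 1 →
      ρ (K • u n - K • u m) ≤ K * ∑' j, c (j + m) * β (j + m) := by
    intro K hK m n hmn hsmall
    have e : K • u n - K • u m = ∑ j ∈ Finset.Ico m n, (K * c j) • d j := by
      rw [← smul_sub, tele m n hmn, Finset.smul_sum]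
      simp_rw [smul_smul]
    rw [e]
    have hjen := mod_jensen ρ hzero hconv (Finset.Ico m n) (fun j => K * c j) d
      (fun j => mul_nonneg hK (hc j))
      (by rw [← Finset.mul_sum]
          exact le_trans (mul_le_mul_of_nonneg_left (sumc m n) hK) hsmall)
    refine le_trans hjen ?_
    calc ∑ j ∈ Finset.Ico m n, K * c j * ρ (d j)
        ≤ ∑ j ∈ Finset.Ico m n, K * (c j * β j) := by
          refine Finset.sum_le_sum fun j _ => ?_
          calc K * c j * ρ (d j) ≤ K * c j * β j :=
                mul_le_mul_of_nonneg_left (hd j) (mul_nonneg hK (hc j))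
            _ = K * (c j * β j) := by ring
      _ = K * ∑ j ∈ Finset.Ico m n, c j * β j := (Finset.mul_sum _ _ _).symm
      _ ≤ K * ∑' j, c (j + m) * β (j + m) :=
          mul_le_mul_of_nonneg_left (sumβ m n) hK
  have hminT : Tendsto (fun p : ℕ × ℕ => min p.1 p.2) atTop atTop := by
    apply Filter.tendsto_atTop.2
    intro b
    filter_upwards [eventually_ge_atTop ((b, b) : ℕ × ℕ)] with p hp
    exact le_min hp.1 hp.2
  have cauchy : ∀ K : ℝ, 1 ≤ K →
      Tendsto (fun p : ℕ × ℕ => ρ (K • u p.1 - K • u p.2)) atTop (nhds 0) := by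
    intro K hK
    have hK0 : (0:ℝ) ≤ K := le_trans zero_le_one hK
    have htailβ : Tendsto (fun p : ℕ × ℕ =>
        K * ∑' j, c (j + min p.1 p.2) * β (j + min p.1 p.2)) atTop (nhds 0) := by
      have h := ((tendsto_sum_nat_add (fun j => c j * β j)).comp hminT).const_mul K
      simpa using h
    have htailc : Tendsto (fun p : ℕ × ℕ => K * ∑' j, c (j + min p.1 p.2)) atTop (nhds 0) := by
      have h := ((tendsto_sum_nat_add c).comp hminT).const_mul K
      simpa using h
    have hsm : ∀ᶠ p : ℕ × ℕ in atTop, K * ∑' j, c (j + min p.1 p.2) ≤ 1 := by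
      filter_upwards [htailc.eventually_lt_const (by norm_num : (0:ℝ) < 1)] with p hp
      exact hp.le
    apply squeeze_zero' (Eventually.of_forall fun p => hnonneg _) ?_ htailβ
    filter_upwards [hsm] with p hp
    rcases le_total p.2 p.1 with h | h
    · rw [min_eq_right h] at hp ⊢
      exact bnd K hK0 p.2 p.1 h hp
    · rw [min_eq_left h] at hp ⊢
      have e : ρ (K • u p.1 - K • u p.2) = ρ (K • u p.2 - K • u p.1) := by
        rw [← mod_neg ρ hsym, neg_sub]
      rw [e]
      exact bnd K hK0 p.1 p.2 h hp
  have c1 := cauchy 1 le_rfl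
  simp only [one_smul] at c1
  obtain ⟨L, hL⟩ := hcomplete u c1
  have hconvK : ∀ K : ℝ, 1 ≤ K → Tendsto (fun n => ρ (K • u n - K • L)) atTop (nhds 0) := by
    intro K hK
    have hK0 : (0:ℝ) < K := lt_of_lt_of_le zero_lt_one hK
    obtain ⟨LK, hLK⟩ := hcomplete (fun n => K • u n) (cauchy K hK)
    have h' : Tendsto (fun n => ρ (u n - K⁻¹ • LK)) atTop (nhds 0) := by
      apply squeeze_zero' (Eventually.of_forall fun n => hnonneg _) ?_
        (by simpa using hLK.const_mul K⁻¹)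
      apply Eventually.of_forall
      intro n
      have e : u n - K⁻¹ • LK = K⁻¹ • (K • u n - LK) := by
        rw [smul_sub, smul_smul, inv_mul_cancel₀ (ne_of_gt hK0), one_smul]
      rw [e]
      exact mod_smul_le ρ hzero hconv (inv_nonneg.2 hK0.le)
        (inv_le_one_of_one_le₀ hK) _
    have hLeq : K⁻¹ • LK = L := mod_lim_unique ρ hzero hnonneg hsym hconv u _ _ h' hL
    have : K • L = LK := by
      rw [← hLeq, smul_smul, mul_inv_cancel₀ (ne_of_gt hK0), one_smul]
    rw [this]
    exact hLK
  refine ⟨L, hconvK, ?_⟩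
  have hwlim : Tendsto (fun n => ρ ((u 0 - u n) - (u 0 - L))) atTop (nhds 0) := by
    have e : ∀ n, (u 0 - u n) - (u 0 - L) = -(u n - L) := fun n => by abel
    simp only [e, mod_neg ρ hsym]
    exact hL
  refine le_trans (hFatou (fun n => u 0 - u n) (u 0 - L) hwlim) ?_
  apply Filter.liminf_le_of_frequently_le
  · apply Filter.Frequently.of_forall
    intro n
    show ρ (u 0 - u n) ≤ _
    have e : u 0 - u n = -(∑ j ∈ Finset.Ico 0 n, c j • d j) := by
      rw [← tele 0 n (Nat.zero_le n)]; abel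
    rw [e, mod_neg ρ hsym]
    refine le_trans (mod_jensen ρ hzero hconv _ c d hc ?_) ?_
    · exact le_trans (Summable.sum_le_tsum _ (fun i _ => hc _) hcs) hc1
    · calc ∑ j ∈ Finset.Ico 0 n, c j * ρ (d j)
          ≤ ∑ j ∈ Finset.Ico 0 n, c j * β j :=
            Finset.sum_le_sum fun j _ => mul_le_mul_of_nonneg_left (hd j) (hc j)
        _ ≤ ∑' j, c j * β j := Summable.sum_le_tsum _ (fun i _ => hcβ' _) hcβ
  · exact Filter.isBoundedUnder_of ⟨0, fun n => hnonneg _⟩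

lemma mod_comb3
    (hconv : ∀ (a b : ℝ) (u v : Y), 0 ≤ a → 0 ≤ b → a + b = 1 →
      ρ (a • u + b • v) ≤ a * ρ u + b * ρ v)
    (a b e : Y) :
    ρ ((1/4:ℝ) • a + (1/4:ℝ) • b + (1/2:ℝ) • e)
      ≤ (1/4) * ρ a + (1/4) * ρ b + (1/2) * ρ e := by
  have h2 := hconv (1/2) (1/2) a b (by norm_num) (by norm_num) (by norm_num)
  have h1 := hconv (1/2) (1/2) ((1/2:ℝ) • a + (1/2:ℝ) • b) e
    (by norm_num) (by norm_num) (by norm_num)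
  have e1 : (1/2:ℝ) • ((1/2:ℝ) • a + (1/2:ℝ) • b) + (1/2:ℝ) • e
      = (1/4:ℝ) • a + (1/4:ℝ) • b + (1/2:ℝ) • e := by module
  rw [e1] at h1
  linarith

lemma mod_comb4
    (hconv : ∀ (a b : ℝ) (u v : Y), 0 ≤ a → 0 ≤ b → a + b = 1 →
      ρ (a • u + b • v) ≤ a * ρ u + b * ρ v)
    (a b e f : Y) :
    ρ ((1/4:ℝ) • a + (1/4:ℝ) • b + (1/4:ℝ) • e + (1/4:ℝ) • f)
      ≤ (1/4) * ρ a + (1/4) * ρ b + (1/4) * ρ e + (1/4) * ρ f := by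
  have h2 := hconv (1/2) (1/2) a b (by norm_num) (by norm_num) (by norm_num)
  have h3 := hconv (1/2) (1/2) e f (by norm_num) (by norm_num) (by norm_num)
  have h1 := hconv (1/2) (1/2) ((1/2:ℝ) • a + (1/2:ℝ) • b) ((1/2:ℝ) • e + (1/2:ℝ) • f)
    (by norm_num) (by norm_num) (by norm_num)
  have e1 : (1/2:ℝ) • ((1/2:ℝ) • a + (1/2:ℝ) • b) + (1/2:ℝ) • ((1/2:ℝ) • e + (1/2:ℝ) • f)
      = (1/4:ℝ) • a + (1/4:ℝ) • b + (1/4:ℝ) • e + (1/4:ℝ) • f := by module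
  rw [e1] at h1
  linarith


end Modular

set_option maxHeartbeats 1000000 in
theorem stmt12 {X Y : Type*} [AddCommGroup X] [Module ℝ X] [AddCommGroup Y] [Module ℝ Y]
    (ρ : Y → ℝ) (α : X → X → ℝ) (φ : X → X → Y)
    (hzero : ∀ u : Y, ρ u = 0 ↔ u = 0)
    (hnonneg : ∀ u : Y, 0 ≤ ρ u)
    (hsym : ∀ (a : ℝ) (u : Y), |a| = 1 → ρ (a • u) = ρ u)
    (hconv : ∀ (a b : ℝ) (u v : Y), 0 ≤ a → 0 ≤ b → a + b = 1 →
      ρ (a • u + b • v) ≤ a * ρ u + b * ρ v)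
    (hcomplete : ∀ u : ℕ → Y,
      Filter.Tendsto (fun p : ℕ × ℕ => ρ (u p.1 - u p.2)) Filter.atTop (nhds 0) →
      ∃ l : Y, Filter.Tendsto (fun n => ρ (u n - l)) Filter.atTop (nhds 0))
    (hFatou : ∀ (u : ℕ → Y) (l : Y),
      Filter.Tendsto (fun n => ρ (u n - l)) Filter.atTop (nhds 0) →
      ρ l ≤ Filter.liminf (fun n => ρ (u n)) Filter.atTop)
    (hα : ∀ x y, 0 ≤ α x y)
    (hsum1 : ∀ x y : X,
      Summable (fun j : ℕ => (1 / 2 ^ (j + 1) : ℝ) * α ((2 ^ j : ℝ) • x) ((2 ^ j : ℝ) • y)))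
    (hsum2 : ∀ x y : X,
      Summable (fun j : ℕ => (1 / 4 ^ (j + 1) : ℝ) * α ((2 ^ j : ℝ) • x) ((2 ^ j : ℝ) • y)))
    (hzeroL : ∀ z : X, φ 0 z = 0) (hzeroR : ∀ x : X, φ x 0 = 0)
    (hineq : ∀ x y z w : X,
      ρ (φ (x + y) (z + w) + φ (x - y) (z - w) - 2 • φ x z - 2 • φ x w) ≤
        α x y * α z w) :
    ∃! H : X → X → Y,
      ((∀ x y z : X, H (x + y) z = H x z + H y z) ∧
      (∀ x z w : X, H x (z + w) + H x (z - w) = 2 • H x z + 2 • H x w)) ∧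
      (∀ x z : X, ρ (φ x z - H x z) ≤
        min ((∑' j : ℕ, (1 / 2 ^ (j + 1) : ℝ) * α ((2 ^ j : ℝ) • x) ((2 ^ j : ℝ) • x)) * α z 0)
            (α x 0 * ∑' j : ℕ, (1 / 4 ^ (j + 1) : ℝ) * α ((2 ^ j : ℝ) • z) ((2 ^ j : ℝ) • z))) := by
  have nn : ∀ v : Y, (2:ℕ) • v = (2:ℝ) • v := fun v => by
    rw [← Nat.cast_smul_eq_nsmul ℝ 2 v]; norm_num
  have half_le : ∀ n : ℕ, (1/2^n : ℝ) ≤ 1 := fun n => by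
    rw [div_le_one (by positivity)]; exact one_le_pow₀ (by norm_num)
  have quarter_le : ∀ n : ℕ, (1/4^n : ℝ) ≤ 1 := fun n => by
    rw [div_le_one (by positivity)]; exact one_le_pow₀ (by norm_num)
  -- basic tendsto facts
  have t1 : ∀ x y : X, Filter.Tendsto
      (fun n : ℕ => (1/2^n : ℝ) * α ((2^n : ℝ) • x) ((2^n : ℝ) • y))
      Filter.atTop (nhds 0) := by
    intro x y
    have h := ((hsum1 x y).tendsto_atTop_zero).const_mul (2:ℝ)
    simp only [mul_zero] at h
    refine h.congr fun n => ?_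
    rw [pow_succ]; ring
  have t4 : ∀ z w : X, Filter.Tendsto
      (fun n : ℕ => (1/4^n : ℝ) * α ((2^n : ℝ) • z) ((2^n : ℝ) • w))
      Filter.atTop (nhds 0) := by
    intro z w
    have h := ((hsum2 z w).tendsto_atTop_zero).const_mul (4:ℝ)
    simp only [mul_zero] at h
    refine h.congr fun n => ?_
    rw [pow_succ]; ring
  have t3 : ∀ x : X, Filter.Tendsto
      (fun n : ℕ => (1/2^n : ℝ) *
        ∑' j : ℕ, (1/2^(j+1) : ℝ) * α ((2^j : ℝ) • ((2^n : ℝ) • x)) ((2^j : ℝ) • ((2^n : ℝ) • x)))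
      Filter.atTop (nhds 0) := by
    intro x
    have h := tendsto_sum_nat_add
      (fun j : ℕ => (1/2^(j+1) : ℝ) * α ((2^j : ℝ) • x) ((2^j : ℝ) • x))
    refine h.congr fun n => ?_
    rw [← tsum_mul_left]
    refine tsum_congr fun j => ?_
    rw [smul_smul, ← pow_add]
    ring
  -- first construction
  have key1 : ∀ x z : X, ∃ L : Y,
      (∀ K : ℝ, 1 ≤ K → Filter.Tendsto
        (fun n => ρ (K • ((1/2^n : ℝ) • φ ((2^n : ℝ) • x) z) - K • L)) Filter.atTop (nhds 0)) ∧
      ρ (φ x z - L) ≤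
        (∑' j : ℕ, (1/2^(j+1) : ℝ) * α ((2^j : ℝ) • x) ((2^j : ℝ) • x)) * α z 0 := by
    intro x z
    have hcs : Summable (fun j : ℕ => (1/2^(j+1) : ℝ)) := by
      have h := (summable_geometric_of_lt_one (by norm_num : (0:ℝ) ≤ 1/2)
        (by norm_num : (1/2:ℝ) < 1)).mul_left (1/2 : ℝ)
      exact h.congr fun j => by rw [div_pow, one_pow, pow_succ]; ring
    have hc1 : (∑' j : ℕ, (1/2^(j+1) : ℝ)) ≤ 1 := by
      have e : ∀ j : ℕ, (1/2^(j+1) : ℝ) = (1/2) * (1/2)^j := fun j => by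
        rw [div_pow, one_pow, pow_succ]; ring
      rw [tsum_congr e, tsum_mul_left, tsum_geometric_of_lt_one (by norm_num) (by norm_num)]
      norm_num
    obtain ⟨L, h1, h2⟩ := mod_key ρ hzero hnonneg hsym hconv hcomplete hFatou
      (fun j => (1/2^(j+1) : ℝ))
      (fun j => α ((2^j : ℝ) • x) ((2^j : ℝ) • x) * α z 0)
      (fun j => φ ((2^(j+1) : ℝ) • x) z - (2:ℝ) • φ ((2^j : ℝ) • x) z)
      (fun n => (1/2^n : ℝ) • φ ((2^n : ℝ) • x) z)
      (fun j => by positivity) (fun j => mul_nonneg (hα _ _) (hα _ _)) hcs hc1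
      (by
        have h := (hsum1 x x).mul_right (α z 0)
        exact h.congr fun j => by ring)
      (by
        intro j
        show (1/2^(j+1) : ℝ) • φ ((2^(j+1) : ℝ) • x) z
          = (1/2^j : ℝ) • φ ((2^j : ℝ) • x) z
            + (1/2^(j+1) : ℝ) • (φ ((2^(j+1) : ℝ) • x) z - (2:ℝ) • φ ((2^j : ℝ) • x) z)
        module)
      (by
        intro j
        show ρ (φ ((2^(j+1) : ℝ) • x) z - (2:ℝ) • φ ((2^j : ℝ) • x) z)
          ≤ α ((2^j : ℝ) • x) ((2^j : ℝ) • x) * α z 0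
        have h := hineq ((2^j : ℝ) • x) ((2^j : ℝ) • x) z 0
        simp only [sub_self, add_zero, sub_zero, hzeroL, hzeroR, smul_zero] at h
        have e : (2^j : ℝ) • x + (2^j : ℝ) • x = (2^(j+1) : ℝ) • x := by
          rw [pow_succ]; module
        rw [e] at h
        rw [← nn]
        exact h)
    refine ⟨L, h1, ?_⟩
    have h2' : ρ (φ x z - L) ≤
        ∑' j : ℕ, (1/2^(j+1) : ℝ) * (α ((2^j : ℝ) • x) ((2^j : ℝ) • x) * α z 0) := by
      have e0 : (1/2^(0:ℕ) : ℝ) • φ ((2^(0:ℕ) : ℝ) • x) z = φ x z := by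
        norm_num
      calc ρ (φ x z - L) = ρ ((1/2^(0:ℕ) : ℝ) • φ ((2^(0:ℕ) : ℝ) • x) z - L) := by rw [e0]
        _ ≤ _ := h2
    calc ρ (φ x z - L) ≤ _ := h2'
      _ = (∑' j : ℕ, (1/2^(j+1) : ℝ) * α ((2^j : ℝ) • x) ((2^j : ℝ) • x)) * α z 0 := by
        rw [← tsum_mul_right]
        exact tsum_congr fun j => by ring
  choose H hHconv hHbound using key1
  -- second construction
  have key2 : ∀ x z : X, ∃ L : Y,
      (∀ K : ℝ, 1 ≤ K → Filter.Tendsto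
        (fun n => ρ (K • ((1/4^n : ℝ) • φ x ((2^n : ℝ) • z)) - K • L)) Filter.atTop (nhds 0)) ∧
      ρ (φ x z - L) ≤
        α x 0 * ∑' j : ℕ, (1/4^(j+1) : ℝ) * α ((2^j : ℝ) • z) ((2^j : ℝ) • z) := by
    intro x z
    have hcs : Summable (fun j : ℕ => (1/4^(j+1) : ℝ)) := by
      have h := (summable_geometric_of_lt_one (by norm_num : (0:ℝ) ≤ 1/4)
        (by norm_num : (1/4:ℝ) < 1)).mul_left (1/4 : ℝ)
      exact h.congr fun j => by rw [div_pow, one_pow, pow_succ]; ring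
    have hc1 : (∑' j : ℕ, (1/4^(j+1) : ℝ)) ≤ 1 := by
      have e : ∀ j : ℕ, (1/4^(j+1) : ℝ) = (1/4) * (1/4)^j := fun j => by
        rw [div_pow, one_pow, pow_succ]; ring
      rw [tsum_congr e, tsum_mul_left, tsum_geometric_of_lt_one (by norm_num) (by norm_num)]
      norm_num
    obtain ⟨L, h1, h2⟩ := mod_key ρ hzero hnonneg hsym hconv hcomplete hFatou
      (fun j => (1/4^(j+1) : ℝ))
      (fun j => α x 0 * α ((2^j : ℝ) • z) ((2^j : ℝ) • z))
      (fun j => φ x ((2^(j+1) : ℝ) • z) - (4:ℝ) • φ x ((2^j : ℝ) • z))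
      (fun n => (1/4^n : ℝ) • φ x ((2^n : ℝ) • z))
      (fun j => by positivity) (fun j => mul_nonneg (hα _ _) (hα _ _)) hcs hc1
      (by
        have h := (hsum2 z z).mul_left (α x 0)
        exact h.congr fun j => by ring)
      (by
        intro j
        show (1/4^(j+1) : ℝ) • φ x ((2^(j+1) : ℝ) • z)
          = (1/4^j : ℝ) • φ x ((2^j : ℝ) • z)
            + (1/4^(j+1) : ℝ) • (φ x ((2^(j+1) : ℝ) • z) - (4:ℝ) • φ x ((2^j : ℝ) • z))
        module)
      (by
        intro j
        show ρ (φ x ((2^(j+1) : ℝ) • z) - (4:ℝ) • φ x ((2^j : ℝ) • z))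
          ≤ α x 0 * α ((2^j : ℝ) • z) ((2^j : ℝ) • z)
        have h := hineq x 0 ((2^j : ℝ) • z) ((2^j : ℝ) • z)
        simp only [sub_self, add_zero, sub_zero, hzeroL, hzeroR, smul_zero] at h
        have e : (2^j : ℝ) • z + (2^j : ℝ) • z = (2^(j+1) : ℝ) • z := by
          rw [pow_succ]; module
        rw [e] at h
        have e4 : φ x ((2^(j+1) : ℝ) • z) - (4:ℝ) • φ x ((2^j : ℝ) • z)
            = φ x ((2^(j+1) : ℝ) • z) - (2:ℕ) • φ x ((2^j : ℝ) • z)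
              - (2:ℕ) • φ x ((2^j : ℝ) • z) := by
          simp only [nn]; module
        rw [e4]
        exact h)
    refine ⟨L, h1, ?_⟩
    have h2' : ρ (φ x z - L) ≤
        ∑' j : ℕ, (1/4^(j+1) : ℝ) * (α x 0 * α ((2^j : ℝ) • z) ((2^j : ℝ) • z)) := by
      have e0 : (1/4^(0:ℕ) : ℝ) • φ x ((2^(0:ℕ) : ℝ) • z) = φ x z := by
        norm_num
      calc ρ (φ x z - L) = ρ ((1/4^(0:ℕ) : ℝ) • φ x ((2^(0:ℕ) : ℝ) • z) - L) := by rw [e0]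
        _ ≤ _ := h2
    calc ρ (φ x z - L) ≤ _ := h2'
      _ = α x 0 * ∑' j : ℕ, (1/4^(j+1) : ℝ) * α ((2^j : ℝ) • z) ((2^j : ℝ) • z) := by
        rw [← tsum_mul_left]
        exact tsum_congr fun j => by ring
  choose H2 hH2conv hH2bound using key2
  -- H vanishes at 0 in the first variable
  have Hzero1 : ∀ z : X, H 0 z = 0 := by
    intro z
    have h := hHconv 0 z 1 le_rfl
    simp only [one_smul] at h
    have e : ∀ n : ℕ, ρ ((1/2^n : ℝ) • φ ((2^n : ℝ) • (0:X)) z - H 0 z) = ρ (-(H 0 z)) := by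
      intro n; rw [smul_zero, hzeroL, smul_zero, zero_sub]
    have h2 : Filter.Tendsto (fun _ : ℕ => ρ (-(H 0 z))) Filter.atTop (nhds 0) := h.congr e
    have h3 : ρ (-(H 0 z)) = 0 := tendsto_nhds_unique tendsto_const_nhds h2
    rw [mod_neg ρ hsym] at h3
    exact (hzero _).1 h3
  have H2zero : ∀ z : X, H2 0 z = 0 := by
    intro z
    have h := hH2conv 0 z 1 le_rfl
    simp only [one_smul] at h
    have e : ∀ n : ℕ, ρ ((1/4^n : ℝ) • φ (0:X) ((2^n : ℝ) • z) - H2 0 z) = ρ (-(H2 0 z)) := by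
      intro n; rw [hzeroL, smul_zero, zero_sub]
    have h2 : Filter.Tendsto (fun _ : ℕ => ρ (-(H2 0 z))) Filter.atTop (nhds 0) := h.congr e
    have h3 : ρ (-(H2 0 z)) = 0 := tendsto_nhds_unique tendsto_const_nhds h2
    rw [mod_neg ρ hsym] at h3
    exact (hzero _).1 h3
  -- Jensen equation in the first variable for H
  have E1 : ∀ x y z : X, H (x+y) z + H (x-y) z = (2:ℝ) • H x z := by
    intro x y z
    have hA := hHconv (x+y) z 4 (by norm_num)
    have hB := hHconv (x-y) z 4 (by norm_num)
    have hC := hHconv x z 4 (by norm_num)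
    set l : Y := H (x+y) z + H (x-y) z - (2:ℝ) • H x z with hl
    set s : ℕ → Y := fun n => (1/2^n : ℝ) • φ ((2^n : ℝ) • (x+y)) z
      + (1/2^n : ℝ) • φ ((2^n : ℝ) • (x-y)) z
      - (2:ℝ) • ((1/2^n : ℝ) • φ ((2^n : ℝ) • x) z) with hs
    have hs0 : Filter.Tendsto (fun n => ρ (s n)) Filter.atTop (nhds 0) := by
      have hg : Filter.Tendsto
          (fun n : ℕ => ((1/2^n : ℝ) * α ((2^n : ℝ) • x) ((2^n : ℝ) • y)) * α z 0)
          Filter.atTop (nhds 0) := by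
        have h := (t1 x y).mul_const (α z 0)
        simpa only [zero_mul] using h
      apply squeeze_zero' (Filter.Eventually.of_forall fun n => hnonneg _)
        (Filter.Eventually.of_forall fun n => ?_) hg
      have h := hineq ((2^n : ℝ) • x) ((2^n : ℝ) • y) z 0
      simp only [add_zero, sub_zero, hzeroR, smul_zero] at h
      have e1 : (2^n : ℝ) • x + (2^n : ℝ) • y = (2^n : ℝ) • (x+y) := by module
      have e2 : (2^n : ℝ) • x - (2^n : ℝ) • y = (2^n : ℝ) • (x-y) := by module
      rw [e1, e2] at h
      have e3 : s n = (1/2^n : ℝ) • (φ ((2^n : ℝ) • (x+y)) z + φ ((2^n : ℝ) • (x-y)) z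
          - (2:ℕ) • φ ((2^n : ℝ) • x) z) := by
        simp only [hs, nn]; module
      rw [e3]
      calc ρ ((1/2^n : ℝ) • (φ ((2^n : ℝ) • (x+y)) z + φ ((2^n : ℝ) • (x-y)) z
            - (2:ℕ) • φ ((2^n : ℝ) • x) z))
          ≤ (1/2^n : ℝ) * ρ (φ ((2^n : ℝ) • (x+y)) z + φ ((2^n : ℝ) • (x-y)) z
            - (2:ℕ) • φ ((2^n : ℝ) • x) z) :=
            mod_smul_le ρ hzero hconv (by positivity) (half_le n) _
        _ ≤ ((1/2^n : ℝ) * α ((2^n : ℝ) • x) ((2^n : ℝ) • y)) * α z 0 := by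
            rw [mul_assoc]
            exact mul_le_mul_of_nonneg_left h (by positivity)
    have hsl : Filter.Tendsto (fun n => ρ (s n - l)) Filter.atTop (nhds 0) := by
      have hg : Filter.Tendsto (fun n : ℕ =>
          (1/4 : ℝ) * ρ ((4:ℝ) • ((1/2^n : ℝ) • φ ((2^n : ℝ) • (x+y)) z) - (4:ℝ) • H (x+y) z)
          + (1/4 : ℝ) * ρ ((4:ℝ) • ((1/2^n : ℝ) • φ ((2^n : ℝ) • (x-y)) z) - (4:ℝ) • H (x-y) z)
          + (1/2 : ℝ) * ρ ((4:ℝ) • ((1/2^n : ℝ) • φ ((2^n : ℝ) • x) z) - (4:ℝ) • H x z))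
          Filter.atTop (nhds 0) := by
        have h := ((hA.const_mul (1/4 : ℝ)).add (hB.const_mul (1/4 : ℝ))).add
          (hC.const_mul (1/2 : ℝ))
        simpa only [mul_zero, add_zero] using h
      apply squeeze_zero' (Filter.Eventually.of_forall fun n => hnonneg _)
        (Filter.Eventually.of_forall fun n => ?_) hg
      have e : s n - l = (1/4 : ℝ) • ((4:ℝ) • ((1/2^n : ℝ) • φ ((2^n : ℝ) • (x+y)) z) - (4:ℝ) • H (x+y) z)
          + (1/4 : ℝ) • ((4:ℝ) • ((1/2^n : ℝ) • φ ((2^n : ℝ) • (x-y)) z) - (4:ℝ) • H (x-y) z)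
          + (1/2 : ℝ) • (-((4:ℝ) • ((1/2^n : ℝ) • φ ((2^n : ℝ) • x) z) - (4:ℝ) • H x z)) := by
        simp only [hs, hl]; module
      rw [e]
      have h3 := mod_comb3 ρ hconv
        ((4:ℝ) • ((1/2^n : ℝ) • φ ((2^n : ℝ) • (x+y)) z) - (4:ℝ) • H (x+y) z)
        ((4:ℝ) • ((1/2^n : ℝ) • φ ((2^n : ℝ) • (x-y)) z) - (4:ℝ) • H (x-y) z)
        (-((4:ℝ) • ((1/2^n : ℝ) • φ ((2^n : ℝ) • x) z) - (4:ℝ) • H x z))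
      rw [mod_neg ρ hsym] at h3
      linarith
    have hl0 : l = 0 := by
      have hs0' : Filter.Tendsto (fun n => ρ (s n - 0)) Filter.atTop (nhds 0) := by
        simpa only [sub_zero] using hs0
      exact mod_lim_unique ρ hzero hnonneg hsym hconv s l 0 hsl hs0'
    rw [hl] at hl0
    have h := sub_eq_zero.1 hl0
    exact h
  -- quadratic equation in the second variable for H
  have E2 : ∀ x z w : X, H x (z+w) + H x (z-w) = (2:ℝ) • H x z + (2:ℝ) • H x w := by
    intro x z w
    have hA := hHconv x (z+w) 4 (by norm_num)
    have hB := hHconv x (z-w) 4 (by norm_num)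
    have hC := hHconv x z 8 (by norm_num)
    have hD := hHconv x w 8 (by norm_num)
    set l : Y := H x (z+w) + H x (z-w) - (2:ℝ) • H x z - (2:ℝ) • H x w with hl
    set s : ℕ → Y := fun n => (1/2^n : ℝ) • φ ((2^n : ℝ) • x) (z+w)
      + (1/2^n : ℝ) • φ ((2^n : ℝ) • x) (z-w)
      - (2:ℝ) • ((1/2^n : ℝ) • φ ((2^n : ℝ) • x) z)
      - (2:ℝ) • ((1/2^n : ℝ) • φ ((2^n : ℝ) • x) w) with hs
    have hs0 : Filter.Tendsto (fun n => ρ (s n)) Filter.atTop (nhds 0) := by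
      have hg : Filter.Tendsto
          (fun n : ℕ => ((1/2^n : ℝ) * α ((2^n : ℝ) • x) ((2^n : ℝ) • (0:X))) * α z w)
          Filter.atTop (nhds 0) := by
        have h := (t1 x 0).mul_const (α z w)
        simpa only [zero_mul] using h
      apply squeeze_zero' (Filter.Eventually.of_forall fun n => hnonneg _)
        (Filter.Eventually.of_forall fun n => ?_) hg
      have h := hineq ((2^n : ℝ) • x) 0 z w
      simp only [add_zero, sub_zero] at h
      have e3 : s n = (1/2^n : ℝ) • (φ ((2^n : ℝ) • x) (z+w) + φ ((2^n : ℝ) • x) (z-w)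
          - (2:ℕ) • φ ((2^n : ℝ) • x) z - (2:ℕ) • φ ((2^n : ℝ) • x) w) := by
        simp only [hs, nn]; module
      rw [e3]
      have e4 : ((2^n : ℝ) • x : X) + 0 = (2^n : ℝ) • x := add_zero _
      calc ρ ((1/2^n : ℝ) • (φ ((2^n : ℝ) • x) (z+w) + φ ((2^n : ℝ) • x) (z-w)
            - (2:ℕ) • φ ((2^n : ℝ) • x) z - (2:ℕ) • φ ((2^n : ℝ) • x) w))
          ≤ (1/2^n : ℝ) * ρ (φ ((2^n : ℝ) • x) (z+w) + φ ((2^n : ℝ) • x) (z-w)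
            - (2:ℕ) • φ ((2^n : ℝ) • x) z - (2:ℕ) • φ ((2^n : ℝ) • x) w) :=
            mod_smul_le ρ hzero hconv (by positivity) (half_le n) _
        _ ≤ (1/2^n : ℝ) * (α ((2^n : ℝ) • x) 0 * α z w) :=
            mul_le_mul_of_nonneg_left h (by positivity)
        _ = ((1/2^n : ℝ) * α ((2^n : ℝ) • x) ((2^n : ℝ) • (0:X))) * α z w := by
            rw [smul_zero]; ring
    have hsl : Filter.Tendsto (fun n => ρ (s n - l)) Filter.atTop (nhds 0) := by
      have hg : Filter.Tendsto (fun n : ℕ =>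
          (1/4 : ℝ) * ρ ((4:ℝ) • ((1/2^n : ℝ) • φ ((2^n : ℝ) • x) (z+w)) - (4:ℝ) • H x (z+w))
          + (1/4 : ℝ) * ρ ((4:ℝ) • ((1/2^n : ℝ) • φ ((2^n : ℝ) • x) (z-w)) - (4:ℝ) • H x (z-w))
          + (1/4 : ℝ) * ρ ((8:ℝ) • ((1/2^n : ℝ) • φ ((2^n : ℝ) • x) z) - (8:ℝ) • H x z)
          + (1/4 : ℝ) * ρ ((8:ℝ) • ((1/2^n : ℝ) • φ ((2^n : ℝ) • x) w) - (8:ℝ) • H x w))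
          Filter.atTop (nhds 0) := by
        have h := (((hA.const_mul (1/4 : ℝ)).add (hB.const_mul (1/4 : ℝ))).add
          (hC.const_mul (1/4 : ℝ))).add (hD.const_mul (1/4 : ℝ))
        simpa only [mul_zero, add_zero] using h
      apply squeeze_zero' (Filter.Eventually.of_forall fun n => hnonneg _)
        (Filter.Eventually.of_forall fun n => ?_) hg
      have e : s n - l =
          (1/4 : ℝ) • ((4:ℝ) • ((1/2^n : ℝ) • φ ((2^n : ℝ) • x) (z+w)) - (4:ℝ) • H x (z+w))
          + (1/4 : ℝ) • ((4:ℝ) • ((1/2^n : ℝ) • φ ((2^n : ℝ) • x) (z-w)) - (4:ℝ) • H x (z-w))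
          + (1/4 : ℝ) • (-((8:ℝ) • ((1/2^n : ℝ) • φ ((2^n : ℝ) • x) z) - (8:ℝ) • H x z))
          + (1/4 : ℝ) • (-((8:ℝ) • ((1/2^n : ℝ) • φ ((2^n : ℝ) • x) w) - (8:ℝ) • H x w)) := by
        simp only [hs, hl]; module
      rw [e]
      have h4 := mod_comb4 ρ hconv
        ((4:ℝ) • ((1/2^n : ℝ) • φ ((2^n : ℝ) • x) (z+w)) - (4:ℝ) • H x (z+w))
        ((4:ℝ) • ((1/2^n : ℝ) • φ ((2^n : ℝ) • x) (z-w)) - (4:ℝ) • H x (z-w))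
        (-((8:ℝ) • ((1/2^n : ℝ) • φ ((2^n : ℝ) • x) z) - (8:ℝ) • H x z))
        (-((8:ℝ) • ((1/2^n : ℝ) • φ ((2^n : ℝ) • x) w) - (8:ℝ) • H x w))
      rw [mod_neg ρ hsym, mod_neg ρ hsym] at h4
      linarith
    have hl0 : l = 0 := by
      have hs0' : Filter.Tendsto (fun n => ρ (s n - 0)) Filter.atTop (nhds 0) := by
        simpa only [sub_zero] using hs0
      exact mod_lim_unique ρ hzero hnonneg hsym hconv s l 0 hsl hs0'
    rw [hl] at hl0
    have h := sub_eq_zero.1 hl0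
    rw [← h]; abel
  -- additivity from Jensen equation
  have addOf : ∀ G : X → X → Y, (∀ z : X, G 0 z = 0) →
      (∀ x y z : X, G (x+y) z + G (x-y) z = (2:ℝ) • G x z) →
      ∀ x y z : X, G (x+y) z = G x z + G y z := by
    intro G hG0 hGJ a b z
    have h1 := hGJ ((1/2:ℝ) • (a+b)) ((1/2:ℝ) • (a-b)) z
    have ea : (1/2:ℝ) • (a+b) + (1/2:ℝ) • (a-b) = a := by module
    have eb : (1/2:ℝ) • (a+b) - (1/2:ℝ) • (a-b) = b := by module
    rw [ea, eb] at h1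
    have h2 := hGJ ((1/2:ℝ) • (a+b)) ((1/2:ℝ) • (a+b)) z
    have ec : (1/2:ℝ) • (a+b) + (1/2:ℝ) • (a+b) = a + b := by module
    have ed : (1/2:ℝ) • (a+b) - (1/2:ℝ) • (a+b) = 0 := by module
    rw [ec, ed, hG0 z, add_zero] at h2
    rw [h2]
    exact h1.symm
  have Hadd : ∀ x y z : X, H (x+y) z = H x z + H y z := addOf H Hzero1 E1
  -- Jensen equation in first variable for H2
  have E1' : ∀ x y z : X, H2 (x+y) z + H2 (x-y) z = (2:ℝ) • H2 x z := by
    intro x y z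
    have hA := hH2conv (x+y) z 4 (by norm_num)
    have hB := hH2conv (x-y) z 4 (by norm_num)
    have hC := hH2conv x z 4 (by norm_num)
    set l : Y := H2 (x+y) z + H2 (x-y) z - (2:ℝ) • H2 x z with hl
    set s : ℕ → Y := fun n => (1/4^n : ℝ) • φ (x+y) ((2^n : ℝ) • z)
      + (1/4^n : ℝ) • φ (x-y) ((2^n : ℝ) • z)
      - (2:ℝ) • ((1/4^n : ℝ) • φ x ((2^n : ℝ) • z)) with hs
    have hs0 : Filter.Tendsto (fun n => ρ (s n)) Filter.atTop (nhds 0) := by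
      have hg : Filter.Tendsto
          (fun n : ℕ => α x y * ((1/4^n : ℝ) * α ((2^n : ℝ) • z) ((2^n : ℝ) • (0:X))))
          Filter.atTop (nhds 0) := by
        have h := (t4 z 0).const_mul (α x y)
        simpa only [mul_zero] using h
      apply squeeze_zero' (Filter.Eventually.of_forall fun n => hnonneg _)
        (Filter.Eventually.of_forall fun n => ?_) hg
      have h := hineq x y ((2^n : ℝ) • z) 0
      simp only [add_zero, sub_zero, hzeroR, smul_zero] at h
      have e3 : s n = (1/4^n : ℝ) • (φ (x+y) ((2^n : ℝ) • z) + φ (x-y) ((2^n : ℝ) • z)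
          - (2:ℕ) • φ x ((2^n : ℝ) • z)) := by
        simp only [hs, nn]; module
      rw [e3]
      calc ρ ((1/4^n : ℝ) • (φ (x+y) ((2^n : ℝ) • z) + φ (x-y) ((2^n : ℝ) • z)
            - (2:ℕ) • φ x ((2^n : ℝ) • z)))
          ≤ (1/4^n : ℝ) * ρ (φ (x+y) ((2^n : ℝ) • z) + φ (x-y) ((2^n : ℝ) • z)
            - (2:ℕ) • φ x ((2^n : ℝ) • z)) :=
            mod_smul_le ρ hzero hconv (by positivity) (quarter_le n) _
        _ ≤ (1/4^n : ℝ) * (α x y * α ((2^n : ℝ) • z) 0) :=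
            mul_le_mul_of_nonneg_left h (by positivity)
        _ = α x y * ((1/4^n : ℝ) * α ((2^n : ℝ) • z) ((2^n : ℝ) • (0:X))) := by
            rw [smul_zero]; ring
    have hsl : Filter.Tendsto (fun n => ρ (s n - l)) Filter.atTop (nhds 0) := by
      have hg : Filter.Tendsto (fun n : ℕ =>
          (1/4 : ℝ) * ρ ((4:ℝ) • ((1/4^n : ℝ) • φ (x+y) ((2^n : ℝ) • z)) - (4:ℝ) • H2 (x+y) z)
          + (1/4 : ℝ) * ρ ((4:ℝ) • ((1/4^n : ℝ) • φ (x-y) ((2^n : ℝ) • z)) - (4:ℝ) • H2 (x-y) z)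
          + (1/2 : ℝ) * ρ ((4:ℝ) • ((1/4^n : ℝ) • φ x ((2^n : ℝ) • z)) - (4:ℝ) • H2 x z))
          Filter.atTop (nhds 0) := by
        have h := ((hA.const_mul (1/4 : ℝ)).add (hB.const_mul (1/4 : ℝ))).add
          (hC.const_mul (1/2 : ℝ))
        simpa only [mul_zero, add_zero] using h
      apply squeeze_zero' (Filter.Eventually.of_forall fun n => hnonneg _)
        (Filter.Eventually.of_forall fun n => ?_) hg
      have e : s n - l = (1/4 : ℝ) • ((4:ℝ) • ((1/4^n : ℝ) • φ (x+y) ((2^n : ℝ) • z)) - (4:ℝ) • H2 (x+y) z)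
          + (1/4 : ℝ) • ((4:ℝ) • ((1/4^n : ℝ) • φ (x-y) ((2^n : ℝ) • z)) - (4:ℝ) • H2 (x-y) z)
          + (1/2 : ℝ) • (-((4:ℝ) • ((1/4^n : ℝ) • φ x ((2^n : ℝ) • z)) - (4:ℝ) • H2 x z)) := by
        simp only [hs, hl]; module
      rw [e]
      have h3 := mod_comb3 ρ hconv
        ((4:ℝ) • ((1/4^n : ℝ) • φ (x+y) ((2^n : ℝ) • z)) - (4:ℝ) • H2 (x+y) z)
        ((4:ℝ) • ((1/4^n : ℝ) • φ (x-y) ((2^n : ℝ) • z)) - (4:ℝ) • H2 (x-y) z)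
        (-((4:ℝ) • ((1/4^n : ℝ) • φ x ((2^n : ℝ) • z)) - (4:ℝ) • H2 x z))
      rw [mod_neg ρ hsym] at h3
      linarith
    have hl0 : l = 0 := by
      have hs0' : Filter.Tendsto (fun n => ρ (s n - 0)) Filter.atTop (nhds 0) := by
        simpa only [sub_zero] using hs0
      exact mod_lim_unique ρ hzero hnonneg hsym hconv s l 0 hsl hs0'
    rw [hl] at hl0
    exact sub_eq_zero.1 hl0
  have H2add : ∀ x y z : X, H2 (x+y) z = H2 x z + H2 y z := addOf H2 H2zero E1'
  -- doubling in the first variable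
  have Hpow : ∀ G : X → X → Y, (∀ x y z : X, G (x+y) z = G x z + G y z) →
      ∀ (n : ℕ) (x z : X), G ((2^n : ℝ) • x) z = (2^n : ℝ) • G x z := by
    intro G hG n x z
    induction n with
    | zero => simp
    | succ n ih =>
      have e : (2^(n+1) : ℝ) • x = (2^n : ℝ) • x + (2^n : ℝ) • x := by
        rw [pow_succ]; module
      rw [e, hG, ih, pow_succ]
      module
  -- separation: two additive maps with vanishing scaled bounds agree
  have sep : ∀ (G G' : X → X → Y) (B B' : X → X → ℝ),
      (∀ x y z : X, G (x+y) z = G x z + G y z) →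
      (∀ x y z : X, G' (x+y) z = G' x z + G' y z) →
      (∀ x z : X, ρ (φ x z - G x z) ≤ B x z) →
      (∀ x z : X, ρ (φ x z - G' x z) ≤ B' x z) →
      ∀ x z : X,
      Filter.Tendsto (fun n : ℕ => (1/2^n : ℝ) * B ((2^n : ℝ) • x) z) Filter.atTop (nhds 0) →
      Filter.Tendsto (fun n : ℕ => (1/2^n : ℝ) * B' ((2^n : ℝ) • x) z) Filter.atTop (nhds 0) →
      G x z = G' x z := by
    intro G G' B B' hG hG' hbG hbG' x z hTB hTB'
    have hb : ∀ n : ℕ, ρ ((1/2:ℝ) • (G x z - G' x z)) ≤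
        (1/2 : ℝ) * ((1/2^n : ℝ) * B' ((2^n : ℝ) • x) z)
        + (1/2 : ℝ) * ((1/2^n : ℝ) * B ((2^n : ℝ) • x) z) := by
      intro n
      have einner : (1/2:ℝ) • (φ ((2^n : ℝ) • x) z - G' ((2^n : ℝ) • x) z)
           + (1/2:ℝ) • (G ((2^n : ℝ) • x) z - φ ((2^n : ℝ) • x) z)
           = (2^n : ℝ) • ((1/2:ℝ) • (G x z - G' x z)) := by
        rw [Hpow G hG n x z, Hpow G' hG' n x z]
        module
      have e : (1/2:ℝ) • (G x z - G' x z) = (1/2^n : ℝ) •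
          ((1/2:ℝ) • (φ ((2^n : ℝ) • x) z - G' ((2^n : ℝ) • x) z)
           + (1/2:ℝ) • (G ((2^n : ℝ) • x) z - φ ((2^n : ℝ) • x) z)) := by
        rw [einner, smul_smul, show (1/2^n : ℝ) * 2^n = 1 by field_simp, one_smul]
      rw [e]
      have h1 := hconv (1/2) (1/2) (φ ((2^n : ℝ) • x) z - G' ((2^n : ℝ) • x) z)
        (G ((2^n : ℝ) • x) z - φ ((2^n : ℝ) • x) z) (by norm_num) (by norm_num) (by norm_num)
      have e2 : ρ (G ((2^n : ℝ) • x) z - φ ((2^n : ℝ) • x) z)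
          = ρ (φ ((2^n : ℝ) • x) z - G ((2^n : ℝ) • x) z) := by
        rw [← mod_neg ρ hsym, neg_sub]
      rw [e2] at h1
      have hBb := hbG ((2^n : ℝ) • x) z
      have hBb' := hbG' ((2^n : ℝ) • x) z
      calc ρ ((1/2^n : ℝ) • ((1/2:ℝ) • (φ ((2^n : ℝ) • x) z - G' ((2^n : ℝ) • x) z)
            + (1/2:ℝ) • (G ((2^n : ℝ) • x) z - φ ((2^n : ℝ) • x) z)))
          ≤ (1/2^n : ℝ) * ρ ((1/2:ℝ) • (φ ((2^n : ℝ) • x) z - G' ((2^n : ℝ) • x) z)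
            + (1/2:ℝ) • (G ((2^n : ℝ) • x) z - φ ((2^n : ℝ) • x) z)) :=
            mod_smul_le ρ hzero hconv (by positivity) (half_le n) _
        _ ≤ (1/2 : ℝ) * ((1/2^n : ℝ) * B' ((2^n : ℝ) • x) z)
            + (1/2 : ℝ) * ((1/2^n : ℝ) * B ((2^n : ℝ) • x) z) := by
            have : (0:ℝ) ≤ (1/2^n : ℝ) := by positivity
            nlinarith [hnonneg (φ ((2^n : ℝ) • x) z - G' ((2^n : ℝ) • x) z),
              hnonneg (φ ((2^n : ℝ) • x) z - G ((2^n : ℝ) • x) z)]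
    have hlim : Filter.Tendsto (fun n : ℕ =>
        (1/2 : ℝ) * ((1/2^n : ℝ) * B' ((2^n : ℝ) • x) z)
        + (1/2 : ℝ) * ((1/2^n : ℝ) * B ((2^n : ℝ) • x) z)) Filter.atTop (nhds 0) := by
      have h := (hTB'.const_mul (1/2 : ℝ)).add (hTB.const_mul (1/2 : ℝ))
      simpa only [mul_zero, add_zero] using h
    have hle : ρ ((1/2:ℝ) • (G x z - G' x z)) ≤ 0 := ge_of_tendsto' hlim hb
    have h0 : ρ ((1/2:ℝ) • (G x z - G' x z)) = 0 := le_antisymm hle (hnonneg _)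
    have := (hzero _).1 h0
    rcases smul_eq_zero.1 this with h | h
    · norm_num at h
    · exact sub_eq_zero.1 h
  -- H = H2
  have hH12 : ∀ x z : X, H x z = H2 x z := by
    intro x z
    refine sep H H2
      (fun x z => (∑' j : ℕ, (1/2^(j+1) : ℝ) * α ((2^j : ℝ) • x) ((2^j : ℝ) • x)) * α z 0)
      (fun x z => α x 0 * ∑' j : ℕ, (1/4^(j+1) : ℝ) * α ((2^j : ℝ) • z) ((2^j : ℝ) • z))
      Hadd H2add hHbound hH2bound x z ?_ ?_
    · have h := (t3 x).mul_const (α z 0)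
      simp only [zero_mul] at h
      refine h.congr fun n => ?_
      ring
    · have h := (t1 x 0).mul_const
        (∑' j : ℕ, (1/4^(j+1) : ℝ) * α ((2^j : ℝ) • z) ((2^j : ℝ) • z))
      simp only [zero_mul] at h
      refine h.congr fun n => ?_
      rw [smul_zero]
      ring
  -- conclusion
  refine ⟨H, ⟨⟨Hadd, fun x z w => ?_⟩, fun x z => ?_⟩, ?_⟩
  · rw [nn, nn]
    exact E2 x z w
  · refine le_min (hHbound x z) ?_
    rw [hH12 x z]
    exact hH2bound x z
  · intro H' ⟨⟨hadd', _⟩, hbound'⟩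
    funext x z
    refine sep H' H
      (fun x z => (∑' j : ℕ, (1/2^(j+1) : ℝ) * α ((2^j : ℝ) • x) ((2^j : ℝ) • x)) * α z 0)
      (fun x z => (∑' j : ℕ, (1/2^(j+1) : ℝ) * α ((2^j : ℝ) • x) ((2^j : ℝ) • x)) * α z 0)
      hadd' Hadd (fun x z => le_trans (hbound' x z) (min_le_left _ _)) hHbound x z ?_ ?_ <;>
    · have h := (t3 x).mul_const (α z 0)
      simp only [zero_mul] at h
      refine h.congr fun n => ?_
      ring
end

section
/- Let X be a normed vector space and Y_ρ a ρ-complete convex modular space satisfying the Fatou property. Let 0 < r < 1 and θ > 0, and let φ: X × X → Y_ρ satisfy φ(x,0) = φ(0,z) = 0 and ρ(φ(x+y,z+w) + φ(x−y,z−w) − 2φ(x,z) − 2φ(x,w)) ≤ θ(‖x‖ʳ + ‖y‖ʳ)(‖z‖ʳ + ‖w‖ʳ). Then there exists a unique additive-quadratic mapping H: X × X → Y_ρ with ρ(φ(x,z) − H(x,z)) ≤ 2θ‖x‖ʳ‖z‖ʳ/(4 − 2ʳ) for all x,z ∈ X. -/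
lemma stmt13_conv2 {Y : Type*} [AddCommGroup Y] [Module ℝ Y] (ρ : Y → ℝ) (h0 : ρ (0:Y) = 0)
    (hconv : ∀ (a b : ℝ) (u v : Y), 0 ≤ a → 0 ≤ b → a + b = 1 →
      ρ (a • u + b • v) ≤ a * ρ u + b * ρ v)
    (a b : ℝ) (u v : Y) (ha : 0 ≤ a) (hb : 0 ≤ b) (hab : a + b ≤ 1) :
    ρ (a • u + b • v) ≤ a * ρ u + b * ρ v := by
  rcases eq_or_lt_of_le (add_nonneg ha hb) with hs | hs
  · have ha0 : a = 0 := by linarith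
    have hb0 : b = 0 := by linarith
    simp [ha0, hb0, h0]
  · set s := a + b with hs_def
    have hsne : s ≠ 0 := ne_of_gt hs
    have key := hconv s (1 - s) ((a/s) • u + (b/s) • v) 0 hs.le (by linarith) (by ring)
    have inner := hconv (a/s) (b/s) u v (div_nonneg ha hs.le) (div_nonneg hb hs.le)
      (by field_simp; exact hs_def.symm)
    have heq : s • ((a/s) • u + (b/s) • v) + (1 - s) • (0:Y) = a • u + b • v := by
      rw [smul_add, smul_smul, smul_smul, smul_zero, add_zero,
        mul_div_cancel₀ a hsne, mul_div_cancel₀ b hsne]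
    rw [heq] at key
    calc ρ (a • u + b • v) ≤ s * ρ ((a/s) • u + (b/s) • v) + (1 - s) * ρ 0 := key
      _ ≤ s * ((a/s) * ρ u + (b/s) * ρ v) + (1 - s) * ρ 0 :=
        by gcongr
      _ = a * ρ u + b * ρ v := by rw [h0]; field_simp; simp

lemma stmt13_convsum {Y : Type*} [AddCommGroup Y] [Module ℝ Y] (ρ : Y → ℝ) (h0 : ρ (0:Y) = 0)
    (hconv : ∀ (a b : ℝ) (u v : Y), 0 ≤ a → 0 ≤ b → a + b = 1 →
      ρ (a • u + b • v) ≤ a * ρ u + b * ρ v)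
    (v : ℕ → Y) :
    ∀ (n : ℕ) (c : ℕ → ℝ), (∀ k, 0 ≤ c k) → (∑ k ∈ Finset.range n, c k) ≤ 1 →
      ρ (∑ k ∈ Finset.range n, c k • v k) ≤ ∑ k ∈ Finset.range n, c k * ρ (v k) := by
  intro n
  induction n with
  | zero => intro c _ _; simp [h0]
  | succ n ih =>
    intro c hc hsum
    rw [Finset.sum_range_succ] at hsum ⊢
    rw [Finset.sum_range_succ]
    set s := ∑ k ∈ Finset.range n, c k with hs_def
    have hs0 : 0 ≤ s := Finset.sum_nonneg fun k _ => hc k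
    rcases eq_or_lt_of_le hs0 with hs | hs
    · have hzero : ∀ k ∈ Finset.range n, c k = 0 := by
        intro k hk
        have := (Finset.sum_eq_zero_iff_of_nonneg (fun k _ => hc k)).mp hs.symm
        exact this k hk
      have hA : (∑ k ∈ Finset.range n, c k • v k) = 0 :=
        Finset.sum_eq_zero fun k hk => by rw [hzero k hk, zero_smul]
      have hB : (∑ k ∈ Finset.range n, c k * ρ (v k)) = 0 :=
        Finset.sum_eq_zero fun k hk => by rw [hzero k hk, zero_mul]
      rw [hA, hB, zero_add, zero_add]
      have := stmt13_conv2 ρ h0 hconv (c n) 0 (v n) 0 (hc n) le_rfl (by linarith [hc n])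
      simpa [h0] using this
    · have hsne : s ≠ 0 := ne_of_gt hs
      have hA : (∑ k ∈ Finset.range n, c k • v k) = s • (s⁻¹ • ∑ k ∈ Finset.range n, c k • v k) := by
        rw [smul_inv_smul₀ hsne]
      have hinner : s⁻¹ • (∑ k ∈ Finset.range n, c k • v k)
          = ∑ k ∈ Finset.range n, (s⁻¹ * c k) • v k := by
        rw [Finset.smul_sum]
        exact Finset.sum_congr rfl fun k _ => (smul_smul _ _ _)
      have hih := ih (fun k => s⁻¹ * c k) (fun k => mul_nonneg (inv_nonneg.mpr hs0) (hc k))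
        (by rw [← Finset.mul_sum, ← hs_def]; rw [inv_mul_cancel₀ hsne])
      have hmain := stmt13_conv2 ρ h0 hconv s (c n)
        (s⁻¹ • ∑ k ∈ Finset.range n, c k • v k) (v n) hs0 (hc n) hsum
      rw [← hA] at hmain
      refine hmain.trans ?_
      have : s * ρ (s⁻¹ • ∑ k ∈ Finset.range n, c k • v k)
          ≤ ∑ k ∈ Finset.range n, c k * ρ (v k) := by
        rw [hinner]
        calc s * ρ (∑ k ∈ Finset.range n, (s⁻¹ * c k) • v k)
            ≤ s * ∑ k ∈ Finset.range n, (s⁻¹ * c k) * ρ (v k) := by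
              exact mul_le_mul_of_nonneg_left hih hs0
          _ = ∑ k ∈ Finset.range n, c k * ρ (v k) := by
              rw [Finset.mul_sum]
              exact Finset.sum_congr rfl fun k _ => by field_simp
      linarith

lemma stmt13_geom (p : ℝ) (hp0 : 0 ≤ p) (hp1 : p < 1) (n : ℕ) :
    ∑ k ∈ Finset.range n, p ^ k ≤ (1 - p)⁻¹ := by
  rw [geom_sum_eq (ne_of_lt hp1) n]
  have h1 : 0 < 1 - p := by linarith
  have h2 : 0 ≤ p ^ n := pow_nonneg hp0 n
  rw [div_le_iff_of_neg (by linarith : p - 1 < 0)]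
  have h3 : 0 < (1 - p)⁻¹ := inv_pos.mpr h1
  have h4 : (1 - p)⁻¹ * (1 - p) = 1 := inv_mul_cancel₀ (ne_of_gt h1)
  nlinarith

theorem stmt13 {X Y : Type*} [NormedAddCommGroup X] [NormedSpace ℝ X]
    [AddCommGroup Y] [Module ℝ Y]
    (ρ : Y → ℝ) (φ : X → X → Y) (r θ : ℝ)
    (hzero : ∀ u : Y, ρ u = 0 ↔ u = 0)
    (hnonneg : ∀ u : Y, 0 ≤ ρ u)
    (hsym : ∀ (a : ℝ) (u : Y), |a| = 1 → ρ (a • u) = ρ u)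
    (hconv : ∀ (a b : ℝ) (u v : Y), 0 ≤ a → 0 ≤ b → a + b = 1 →
      ρ (a • u + b • v) ≤ a * ρ u + b * ρ v)
    (hcomplete : ∀ u : ℕ → Y,
      Filter.Tendsto (fun p : ℕ × ℕ => ρ (u p.1 - u p.2)) Filter.atTop (nhds 0) →
      ∃ l : Y, Filter.Tendsto (fun n => ρ (u n - l)) Filter.atTop (nhds 0))
    (hFatou : ∀ (u : ℕ → Y) (l : Y),
      Filter.Tendsto (fun n => ρ (u n - l)) Filter.atTop (nhds 0) →
      ρ l ≤ Filter.liminf (fun n => ρ (u n)) Filter.atTop)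
    (hr0 : 0 < r) (hr1 : r < 1) (hθ : 0 < θ)
    (hzeroL : ∀ z : X, φ 0 z = 0) (hzeroR : ∀ x : X, φ x 0 = 0)
    (hineq : ∀ x y z w : X,
      ρ (φ (x + y) (z + w) + φ (x - y) (z - w) - 2 • φ x z - 2 • φ x w) ≤
        θ * (‖x‖ ^ r + ‖y‖ ^ r) * (‖z‖ ^ r + ‖w‖ ^ r)) :
    ∃! H : X → X → Y,
      ((∀ x y z : X, H (x + y) z = H x z + H y z) ∧
      (∀ x z w : X, H x (z + w) + H x (z - w) = 2 • H x z + 2 • H x w)) ∧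
      (∀ x z : X, ρ (φ x z - H x z) ≤ 2 * θ * ‖x‖ ^ r * ‖z‖ ^ r / (4 - 2 ^ r)) := by
  have hρ0 : ρ (0:Y) = 0 := (hzero 0).mpr rfl
  have hneg : ∀ u : Y, ρ (-u) = ρ u := fun u => by
    have h := hsym (-1) u (by norm_num)
    simpa using h
  set q : ℝ := (2:ℝ) ^ r with hq_def
  have hq0 : 0 < q := Real.rpow_pos_of_pos (by norm_num) r
  have hq2 : q < 2 := by
    calc q < (2:ℝ) ^ (1:ℝ) := Real.rpow_lt_rpow_of_exponent_lt (by norm_num) hr1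
    _ = 2 := Real.rpow_one 2
  have hq4 : q < 4 := by linarith
  have h4q : 0 < 4 - q := by linarith
  -- scalar multiplication of a modular
  have convA : ∀ (a : ℝ) (u : Y), 0 ≤ a → a ≤ 1 → ρ (a • u) ≤ a * ρ u := by
    intro a u ha ha1
    have := stmt13_conv2 ρ hρ0 hconv a 0 u 0 ha le_rfl (by linarith)
    simpa [hρ0] using this
  -- rpow of powers of two
  have hpow2 : ∀ n : ℕ, ((2:ℝ) ^ n) ^ r = q ^ n := by
    intro n
    rw [← Real.rpow_natCast (2:ℝ) n, ← Real.rpow_natCast q n, hq_def,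
      ← Real.rpow_mul (by norm_num), ← Real.rpow_mul (by norm_num), mul_comm]
  -- basic bound: ρ (φ x (t+t)) ≤ θ * ‖x‖^r * (2 * ‖t‖^r)
  have bound1 : ∀ x t : X, ρ (φ x (t + t)) ≤ θ * ‖x‖ ^ r * (2 * ‖t‖ ^ r) := by
    intro x t
    have h := hineq 0 x t t
    have hsimp : φ (0 + x) (t + t) + φ (0 - x) (t - t) - 2 • φ 0 t - 2 • φ 0 t
        = φ x (t + t) := by
      rw [zero_add, zero_sub, sub_self, hzeroR, hzeroL, add_zero]
      simp
    rw [hsimp] at h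
    have h0r : ‖(0:X)‖ ^ r = 0 := by
      rw [norm_zero, Real.zero_rpow (ne_of_gt hr0)]
    rw [h0r] at h
    calc ρ (φ x (t + t)) ≤ θ * (0 + ‖x‖ ^ r) * (‖t‖ ^ r + ‖t‖ ^ r) := h
      _ = θ * ‖x‖ ^ r * (2 * ‖t‖ ^ r) := by ring
  -- bound on φ itself
  have boundφ : ∀ x z : X, ρ (φ x z) ≤ 2 * θ * ‖x‖ ^ r * ‖z‖ ^ r := by
    intro x z
    have h2 : ((1:ℝ)/2) • z + ((1:ℝ)/2) • z = z := by
      rw [← add_smul]; norm_num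
    have h := bound1 x (((1:ℝ)/2) • z)
    rw [h2] at h
    have hn : ‖((1:ℝ)/2) • z‖ = (1/2) * ‖z‖ := by
      rw [norm_smul]; simp
    have hrn : ((1/2 : ℝ) * ‖z‖) ^ r = (1/2 : ℝ) ^ r * ‖z‖ ^ r :=
      Real.mul_rpow (by norm_num) (norm_nonneg z)
    have hle1 : ((1:ℝ)/2) ^ r ≤ 1 :=
      Real.rpow_le_one (by norm_num) (by norm_num) hr0.le
    rw [hn, hrn] at h
    have hx0 : (0:ℝ) ≤ ‖x‖ ^ r := Real.rpow_nonneg (norm_nonneg x) r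
    have hz0 : (0:ℝ) ≤ ‖z‖ ^ r := Real.rpow_nonneg (norm_nonneg z) r
    have heq : θ * ‖x‖ ^ r * (2 * ((1/2 : ℝ) ^ r * ‖z‖ ^ r))
        = (1/2 : ℝ) ^ r * (2 * θ * ‖x‖ ^ r * ‖z‖ ^ r) := by ring
    rw [heq] at h
    refine h.trans ?_
    calc (1/2 : ℝ) ^ r * (2 * θ * ‖x‖ ^ r * ‖z‖ ^ r)
        ≤ 1 * (2 * θ * ‖x‖ ^ r * ‖z‖ ^ r) :=
          mul_le_mul_of_nonneg_right hle1 (by positivity)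
      _ = 2 * θ * ‖x‖ ^ r * ‖z‖ ^ r := one_mul _
  -- key contraction inequality
  have key : ∀ x t : X, ρ (φ x (t + t) - (4:ℝ) • φ x t) ≤ θ * ‖x‖ ^ r * (2 * ‖t‖ ^ r) := by
    intro x t
    have h := hineq x 0 t t
    have hsimp : φ (x + 0) (t + t) + φ (x - 0) (t - t) - 2 • φ x t - 2 • φ x t
        = φ x (t + t) - (4:ℝ) • φ x t := by
      rw [add_zero, sub_zero, sub_self, hzeroR, add_zero]
      rw [show ((2:ℕ) • φ x t) = (2:ℝ) • φ x t from (Nat.cast_smul_eq_nsmul ℝ 2 _).symm]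
      module
    rw [hsimp] at h
    have h0r : ‖(0:X)‖ ^ r = 0 := by
      rw [norm_zero, Real.zero_rpow (ne_of_gt hr0)]
    rw [h0r] at h
    calc ρ (φ x (t + t) - (4:ℝ) • φ x t) ≤ θ * (‖x‖ ^ r + 0) * (‖t‖ ^ r + ‖t‖ ^ r) := h
      _ = θ * ‖x‖ ^ r * (2 * ‖t‖ ^ r) := by ring
  -- main estimate on φ
  have main : ∀ x z : X, ρ (φ x z) ≤ 2 * θ * ‖x‖ ^ r * ‖z‖ ^ r / (4 - q) := by
    intro x z
    set Xr := ‖x‖ ^ r with hXr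
    set Zr := ‖z‖ ^ r with hZr
    have hXr0 : 0 ≤ Xr := Real.rpow_nonneg (norm_nonneg x) r
    have hZr0 : 0 ≤ Zr := Real.rpow_nonneg (norm_nonneg z) r
    set t : ℕ → X := fun n => ((2:ℝ) ^ n) • z with ht_def
    set u : ℕ → Y := fun n => ((4:ℝ)⁻¹) ^ n • φ x (t n) with hu_def
    have ht : ∀ n, t n + t n = t (n + 1) := by
      intro n
      show ((2:ℝ) ^ n) • z + ((2:ℝ) ^ n) • z = ((2:ℝ) ^ (n+1)) • z
      rw [← add_smul]; congr 1; ring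
    have hnt : ∀ n, ‖t n‖ ^ r = q ^ n * Zr := by
      intro n
      show ‖((2:ℝ) ^ n) • z‖ ^ r = q ^ n * Zr
      rw [norm_smul, Real.norm_eq_abs, abs_of_pos (by positivity),
        Real.mul_rpow (by positivity) (norm_nonneg z), hpow2 n, hZr]
    -- ρ of v_k
    set v : ℕ → Y := fun k => (4:ℝ) • φ x (t k) - φ x (t (k + 1)) with hv_def
    have hv : ∀ k, ρ (v k) ≤ 2 * θ * Xr * (q ^ k * Zr) := by
      intro k
      have h1 : ρ (v k) = ρ (φ x (t (k+1)) - (4:ℝ) • φ x (t k)) := by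
        rw [← hneg (v k)]; congr 1; show -((4:ℝ) • φ x (t k) - φ x (t (k+1))) = _; abel
      rw [h1, ← ht k]
      have := key x (t k)
      rw [hnt k] at this
      calc ρ (φ x (t k + t k) - (4:ℝ) • φ x (t k)) ≤ θ * Xr * (2 * (q ^ k * Zr)) := this
        _ = 2 * θ * Xr * (q ^ k * Zr) := by ring
    -- telescoping
    have hstep : ∀ k, u k - u (k + 1) = ((4:ℝ)⁻¹) ^ (k + 1) • v k := by
      intro k
      show ((4:ℝ)⁻¹) ^ k • φ x (t k) - ((4:ℝ)⁻¹) ^ (k+1) • φ x (t (k+1))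
          = ((4:ℝ)⁻¹) ^ (k + 1) • ((4:ℝ) • φ x (t k) - φ x (t (k+1)))
      rw [smul_sub, smul_smul]
      congr 2
      rw [pow_succ]
      field_simp
    have htel : ∀ n, φ x z - u n
        = ∑ k ∈ Finset.range n, ((4:ℝ)⁻¹) ^ (k + 1) • v k := by
      intro n
      have h0 : u 0 = φ x z := by
        show ((4:ℝ)⁻¹) ^ 0 • φ x (((2:ℝ) ^ 0) • z) = φ x z
        norm_num
      calc φ x z - u n = u 0 - u n := by rw [h0]
        _ = ∑ k ∈ Finset.range n, (u k - u (k + 1)) := (Finset.sum_range_sub' u n).symm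
        _ = ∑ k ∈ Finset.range n, ((4:ℝ)⁻¹) ^ (k + 1) • v k :=
            Finset.sum_congr rfl fun k _ => hstep k
    -- bound on the partial differences
    have hbound : ∀ n, ρ (φ x z - u n) ≤ 2 * θ * Xr * Zr / (4 - q) := by
      intro n
      rw [htel n]
      have hcsum : (∑ k ∈ Finset.range n, ((4:ℝ)⁻¹) ^ (k + 1)) ≤ 1 := by
        have : ∀ k ∈ Finset.range n, ((4:ℝ)⁻¹) ^ (k + 1) ≤ ((4:ℝ)⁻¹) ^ k * (1/4) := by
          intro k _; rw [pow_succ]; norm_num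
        calc (∑ k ∈ Finset.range n, ((4:ℝ)⁻¹) ^ (k + 1))
            ≤ ∑ k ∈ Finset.range n, ((4:ℝ)⁻¹) ^ k * (1/4) := Finset.sum_le_sum this
          _ = (∑ k ∈ Finset.range n, ((4:ℝ)⁻¹) ^ k) * (1/4) := by rw [Finset.sum_mul]
          _ ≤ (1 - (4:ℝ)⁻¹)⁻¹ * (1/4) := by
              have := stmt13_geom (4:ℝ)⁻¹ (by norm_num) (by norm_num) n
              nlinarith
          _ ≤ 1 := by norm_num
      have h1 := stmt13_convsum ρ hρ0 hconv v n (fun k => ((4:ℝ)⁻¹) ^ (k + 1))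
        (fun k => by positivity) hcsum
      refine h1.trans ?_
      have h2 : ∀ k ∈ Finset.range n,
          ((4:ℝ)⁻¹) ^ (k + 1) * ρ (v k) ≤ (θ/2) * Xr * Zr * (q/4) ^ k := by
        intro k _
        have := hv k
        have h3 : (0:ℝ) ≤ ((4:ℝ)⁻¹) ^ (k + 1) := by positivity
        calc ((4:ℝ)⁻¹) ^ (k + 1) * ρ (v k)
            ≤ ((4:ℝ)⁻¹) ^ (k + 1) * (2 * θ * Xr * (q ^ k * Zr)) := by
              exact mul_le_mul_of_nonneg_left (hv k) h3
          _ = (θ/2) * Xr * Zr * (q/4) ^ k := by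
              rw [div_pow, pow_succ]
              field_simp
              ring
              have hk4 : (1/4:ℝ)^k * 4^k = 1 := by rw [← mul_pow]; norm_num
              linear_combination (Xr * Zr * 4) * hk4
      calc (∑ k ∈ Finset.range n, ((4:ℝ)⁻¹) ^ (k + 1) * ρ (v k))
          ≤ ∑ k ∈ Finset.range n, (θ/2) * Xr * Zr * (q/4) ^ k := Finset.sum_le_sum h2
        _ = (θ/2) * Xr * Zr * ∑ k ∈ Finset.range n, (q/4) ^ k := by rw [Finset.mul_sum]
        _ ≤ (θ/2) * Xr * Zr * (1 - q/4)⁻¹ := by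
            have hg := stmt13_geom (q/4) (by positivity) (by linarith [div_lt_one (show (0:ℝ) < 4 by norm_num) |>.mpr hq4]) n
            have : (0:ℝ) ≤ (θ/2) * Xr * Zr := by positivity
            exact mul_le_mul_of_nonneg_left hg this
        _ = 2 * θ * Xr * Zr / (4 - q) := by
            rw [eq_div_iff (ne_of_gt h4q)]
            have : (1 - q/4)⁻¹ * (1 - q/4) = 1 := inv_mul_cancel₀ (by
              intro h; apply absurd h; intro h'; nlinarith)
            field_simp
            ring
    -- ρ (u n) → 0
    have huρ : ∀ n, ρ (u n) ≤ 2 * θ * Xr * Zr * (q/4) ^ n := by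
      intro n
      have hun : u n = ((4:ℝ)⁻¹) ^ n • φ x (t n) := rfl
      have h1 : ρ (u n) ≤ ((4:ℝ)⁻¹) ^ n * ρ (φ x (t n)) := by
        rw [hun]
        exact convA _ _ (by positivity) (pow_le_one₀ (by norm_num) (by norm_num))
      have h2 : ρ (φ x (t n)) ≤ 2 * θ * Xr * (q ^ n * Zr) := by
        have := boundφ x (t n)
        rw [hnt n] at this
        exact this
      have h3 : ρ (u n) ≤ ((4:ℝ)⁻¹) ^ n * (2 * θ * Xr * (q ^ n * Zr)) :=
        h1.trans (mul_le_mul_of_nonneg_left h2 (by positivity))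
      have h4 : ((4:ℝ)⁻¹) ^ n * (2 * θ * Xr * (q ^ n * Zr)) = 2 * θ * Xr * Zr * (q/4) ^ n := by
        rw [div_eq_mul_inv, mul_pow]
        ring
      linarith
    have hu0 : Filter.Tendsto (fun n => ρ (u n)) Filter.atTop (nhds 0) := by
      apply squeeze_zero (fun n => hnonneg _) huρ
      have hlim : Filter.Tendsto (fun n : ℕ => (q/4) ^ n) Filter.atTop (nhds 0) :=
        tendsto_pow_atTop_nhds_zero_of_lt_one (by positivity) (by
          rw [div_lt_one (by norm_num : (0:ℝ) < 4)]; exact hq4)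
      simpa using hlim.const_mul (2 * θ * Xr * Zr)
    -- Fatou
    have hconv0 : Filter.Tendsto (fun n => ρ ((φ x z - u n) - φ x z)) Filter.atTop (nhds 0) := by
      have heq : ∀ n, ρ ((φ x z - u n) - φ x z) = ρ (u n) := by
        intro n
        rw [show (φ x z - u n) - φ x z = -(u n) by abel, hneg]
      exact hu0.congr fun n => (heq n).symm
    have hF := hFatou (fun n => φ x z - u n) (φ x z) hconv0
    refine hF.trans ?_
    apply Filter.liminf_le_of_frequently_le
    · exact Filter.Frequently.of_forall fun n => hbound n
    · exact Filter.isBoundedUnder_of ⟨0, fun n => hnonneg _⟩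
  -- assemble existence and uniqueness with H = 0
  refine ⟨fun _ _ => 0, ⟨⟨fun x y z => by simp, fun x z w => by simp⟩, fun x z => by
    simpa using main x z⟩, ?_⟩
  intro H ⟨⟨hadd, hquad⟩, hb⟩
  funext x z
  -- H x z = 0
  have hpowH : ∀ n : ℕ, H (((2:ℝ) ^ n) • x) z = ((2:ℝ) ^ n) • H x z := by
    intro n
    induction n with
    | zero => simp
    | succ n ih =>
      have hsplit : ((2:ℝ) ^ (n+1)) • x = ((2:ℝ) ^ n) • x + ((2:ℝ) ^ n) • x := by
        rw [← add_smul]; congr 1; ring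
      rw [hsplit, hadd, ih, ← add_smul]
      congr 1; ring
  have hρH : ∀ n : ℕ, 1 ≤ n →
      ρ (H x z) ≤ (2 * θ + 2 * θ / (4 - q)) * ‖x‖ ^ r * ‖z‖ ^ r * (q/2) ^ n := by
    intro n hn
    set a : ℝ := ((2:ℝ)⁻¹) ^ n with ha_def
    have ha0 : 0 ≤ a := by positivity
    have ha1 : a + a ≤ 1 := by
      have : a ≤ 1/2 := by
        calc a ≤ ((2:ℝ)⁻¹) ^ 1 := pow_le_pow_of_le_one (by norm_num) (by norm_num) hn
          _ = 1/2 := by norm_num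
      linarith
    set x' : X := ((2:ℝ) ^ n) • x with hx'_def
    have hdecomp : H x z = a • (φ x' z) + a • (H x' z - φ x' z) := by
      have h1 : a • (φ x' z) + a • (H x' z - φ x' z) = a • H x' z := by module
      rw [h1, hpowH n, smul_smul]
      have : a * (2:ℝ) ^ n = 1 := by
        rw [ha_def, ← mul_pow]; norm_num
      rw [this, one_smul]
    have hnx' : ‖x'‖ ^ r = q ^ n * ‖x‖ ^ r := by
      rw [hx'_def, norm_smul, Real.norm_eq_abs, abs_of_pos (by positivity),
        Real.mul_rpow (by positivity) (norm_nonneg x), hpow2 n]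
    have hb1 : ρ (φ x' z) ≤ 2 * θ * (q ^ n * ‖x‖ ^ r) * ‖z‖ ^ r := by
      have := boundφ x' z; rwa [hnx'] at this
    have hb2 : ρ (H x' z - φ x' z) ≤ 2 * θ * (q ^ n * ‖x‖ ^ r) * ‖z‖ ^ r / (4 - q) := by
      have h := hb x' z
      rw [show φ x' z - H x' z = -(H x' z - φ x' z) by abel, hneg, hnx'] at h
      exact h
    have hconv2 := stmt13_conv2 ρ hρ0 hconv a a (φ x' z) (H x' z - φ x' z) ha0 ha0 ha1
    rw [← hdecomp] at hconv2
    have hXr0 : (0:ℝ) ≤ ‖x‖ ^ r := Real.rpow_nonneg (norm_nonneg x) r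
    have hZr0 : (0:ℝ) ≤ ‖z‖ ^ r := Real.rpow_nonneg (norm_nonneg z) r
    have hq2n : a * q ^ n = (q/2) ^ n := by
      rw [ha_def, div_eq_mul_inv, mul_pow]; ring
    calc ρ (H x z) ≤ a * ρ (φ x' z) + a * ρ (H x' z - φ x' z) := hconv2
      _ ≤ a * (2 * θ * (q ^ n * ‖x‖ ^ r) * ‖z‖ ^ r)
          + a * (2 * θ * (q ^ n * ‖x‖ ^ r) * ‖z‖ ^ r / (4 - q)) := by
          have := mul_le_mul_of_nonneg_left hb1 ha0
          have := mul_le_mul_of_nonneg_left hb2 ha0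
          gcongr
      _ = (2 * θ + 2 * θ / (4 - q)) * ‖x‖ ^ r * ‖z‖ ^ r * (a * q ^ n) := by
          field_simp
      _ = (2 * θ + 2 * θ / (4 - q)) * ‖x‖ ^ r * ‖z‖ ^ r * (q/2) ^ n := by rw [hq2n]
  have hHρ0 : ρ (H x z) ≤ 0 := by
    have hlim : Filter.Tendsto
        (fun n : ℕ => (2 * θ + 2 * θ / (4 - q)) * ‖x‖ ^ r * ‖z‖ ^ r * (q/2) ^ n)
        Filter.atTop (nhds 0) := by
      have h1 : Filter.Tendsto (fun n : ℕ => (q/2) ^ n) Filter.atTop (nhds 0) :=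
        tendsto_pow_atTop_nhds_zero_of_lt_one (by positivity) (by
          rw [div_lt_one (by norm_num : (0:ℝ) < 2)]; exact hq2)
      simpa using h1.const_mul ((2 * θ + 2 * θ / (4 - q)) * ‖x‖ ^ r * ‖z‖ ^ r)
    apply ge_of_tendsto hlim
    filter_upwards [Filter.eventually_ge_atTop 1] with n hn
    exact hρH n hn
  have : ρ (H x z) = 0 := le_antisymm hHρ0 (hnonneg _)
  exact (hzero _).mp this
end

section
/- Let Y_ρ be a convex modular space satisfying the Δ₂-condition with constant τ (ρ(2u) ≤ τρ(u)). Let φ: X × X → Y_ρ satisfy φ(x,0) = φ(0,z) = 0 and ρ(φ(x+y,z+w) + φ(x−y,z−w) − 2φ(x,z) − 2φ(x,w)) ≤ α(x,y)α(z,w) for all x,y,z,w. Then for every positive integer n and all x,z ∈ X: ρ(φ(x,z) − 2ⁿφ(x/2ⁿ, z)) ≤ (1/τ) ∑_{j=1}^{n} (τ²/2)ʲ α(x/2ʲ, x/2ʲ) · α(z,0). -/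
theorem stmt15 {X Y : Type*} [AddCommGroup X] [Module ℝ X] [AddCommGroup Y] [Module ℝ Y]
    (ρ : Y → ℝ) (α : X → X → ℝ) (φ : X → X → Y) (τ : ℝ)
    (hzero : ∀ u : Y, ρ u = 0 ↔ u = 0)
    (hnonneg : ∀ u : Y, 0 ≤ ρ u)
    (hsym : ∀ (a : ℝ) (u : Y), |a| = 1 → ρ (a • u) = ρ u)
    (hconv : ∀ (a b : ℝ) (u v : Y), 0 ≤ a → 0 ≤ b → a + b = 1 →
      ρ (a • u + b • v) ≤ a * ρ u + b * ρ v)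
    (hτ : 2 ≤ τ)
    (hΔ₂ : ∀ u : Y, ρ (2 • u) ≤ τ * ρ u)
    (hα : ∀ x y, 0 ≤ α x y)
    (hzeroL : ∀ z : X, φ 0 z = 0) (hzeroR : ∀ x : X, φ x 0 = 0)
    (hineq : ∀ x y z w : X,
      ρ (φ (x + y) (z + w) + φ (x - y) (z - w) - 2 • φ x z - 2 • φ x w) ≤
        α x y * α z w) :
    ∀ (n : ℕ), 1 ≤ n → ∀ x z : X,
      ρ (φ x z - (2 ^ n : ℝ) • φ ((1 / 2 ^ n : ℝ) • x) z) ≤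
        (1 / τ) * (∑ j ∈ Finset.range n,
          (τ ^ 2 / 2) ^ (j + 1) * α ((1 / 2 ^ (j + 1) : ℝ) • x) ((1 / 2 ^ (j + 1) : ℝ) • x))
          * α z 0 := by
  have hτ0 : (0:ℝ) < τ := lt_of_lt_of_le (by norm_num) hτ
  have cast2 : ∀ u : Y, (2:ℝ) • u = 2 • u := fun u => by
    rw [two_smul, two_smul]
  -- key inequality
  have key : ∀ x z : X, ρ (φ x z - (2:ℝ) • φ ((1/2:ℝ) • x) z) ≤
      α ((1/2:ℝ)•x) ((1/2:ℝ)•x) * α z 0 := by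
    intro x z
    have h := hineq ((1/2:ℝ)•x) ((1/2:ℝ)•x) z 0
    have hx : (1/2:ℝ)•x + (1/2:ℝ)•x = x := by
      rw [← add_smul]; norm_num
    rw [hx, sub_self, hzeroL, hzeroR, add_zero, smul_zero, sub_zero, add_zero] at h
    rw [cast2]
    exact h
  -- convexity + Δ₂ consequence
  have half : ∀ u v : Y, ρ (u + v) ≤ τ/2 * ρ u + τ/2 * ρ v := by
    intro u v
    have h1 : u + v = 2 • ((1/2:ℝ)•u + (1/2:ℝ)•v) := by
      rw [two_smul]
      module
    have h2 := hΔ₂ ((1/2:ℝ)•u + (1/2:ℝ)•v)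
    have h3 := hconv (1/2) (1/2) u v (by norm_num) (by norm_num) (by norm_num)
    rw [h1]
    calc ρ (2 • ((1/2:ℝ)•u + (1/2:ℝ)•v)) ≤ τ * ρ ((1/2:ℝ)•u + (1/2:ℝ)•v) := h2
      _ ≤ τ * (1/2 * ρ u + 1/2 * ρ v) := by nlinarith [hnonneg ((1/2:ℝ)•u + (1/2:ℝ)•v)]
      _ = τ/2 * ρ u + τ/2 * ρ v := by ring
  intro n hn
  induction n, hn using Nat.le_induction with
  | base =>
    intro x z
    have h := key x z
    simp only [Finset.sum_range_one, zero_add, pow_one]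
    have h1 : (1:ℝ) ≤ 1 / τ * (τ ^ 2 / 2) := by
      rw [div_mul_eq_mul_div, one_mul, le_div_iff₀ hτ0]
      nlinarith
    have h2 : α ((1/2:ℝ)•x) ((1/2:ℝ)•x) * α z 0 ≤
        1 / τ * (τ ^ 2 / 2) * (α ((1/2:ℝ)•x) ((1/2:ℝ)•x) * α z 0) :=
      le_mul_of_one_le_left (mul_nonneg (hα _ _) (hα z 0)) h1
    calc ρ (φ x z - (2:ℝ) • φ ((1/2:ℝ) • x) z) ≤ α ((1/2:ℝ)•x) ((1/2:ℝ)•x) * α z 0 := h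
      _ ≤ 1 / τ * (τ ^ 2 / 2) * (α ((1/2:ℝ)•x) ((1/2:ℝ)•x) * α z 0) := h2
      _ = 1 / τ * (τ ^ 2 / 2 * α ((1/2:ℝ) • x) ((1/2:ℝ) • x)) * α z 0 := by ring
  | succ n hn ih =>
    intro x z
    have hsx : (1/2^(n+1):ℝ) • x = (1/2^n:ℝ) • ((1/2:ℝ) • x) := by
      rw [smul_smul]; congr 1; rw [pow_succ]; ring
    set A := φ x z - (2:ℝ) • φ ((1/2:ℝ) • x) z with hA
    set C := φ ((1/2:ℝ) • x) z - (2^n:ℝ) • φ ((1/2^n:ℝ) • ((1/2:ℝ) • x)) z with hC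
    have hdecomp : φ x z - (2^(n+1):ℝ) • φ ((1/2^(n+1):ℝ) • x) z = A + 2 • C := by
      rw [hsx, hA, hC]
      rw [← cast2]
      rw [pow_succ]
      module
    have hB : ρ (2 • C) ≤ τ * ρ C := hΔ₂ C
    have hCρ := ih ((1/2:ℝ) • x) z
    -- rewrite the sum in ih
    have hsum : ∀ j, (1/2^(j+1):ℝ) • ((1/2:ℝ) • x) = (1/2^(j+2):ℝ) • x := by
      intro j; rw [smul_smul]; congr 1; rw [pow_succ]; ring
    simp only [hsum] at hCρ
    have hAρ := key x z
    have hstep := half A (2 • C)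
    rw [hdecomp]
    set T := ∑ j ∈ Finset.range n, (τ ^ 2 / 2) ^ (j + 1) *
        α ((1/2^(j+2):ℝ) • x) ((1/2^(j+2):ℝ) • x) with hT
    have hsplit : ∑ j ∈ Finset.range (n+1), (τ ^ 2 / 2) ^ (j + 1) *
        α ((1/2^(j+1):ℝ) • x) ((1/2^(j+1):ℝ) • x)
        = (τ^2/2) * T + (τ^2/2) * α ((1/2:ℝ) • x) ((1/2:ℝ) • x) := by
      rw [Finset.sum_range_succ']
      simp only [pow_one, zero_add]
      rw [hT, Finset.mul_sum]
      congr 1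
      exact Finset.sum_congr rfl fun j _ => by ring
    rw [hsplit]
    have hT0 : 0 ≤ T := by
      apply Finset.sum_nonneg
      intro j _
      exact mul_nonneg (by positivity) (hα _ _)
    have hz0 := hα z 0
    have hC0 := hnonneg C
    have : ρ (A + 2 • C) ≤ τ/2 * (α ((1/2:ℝ)•x) ((1/2:ℝ)•x) * α z 0) + τ/2 * (τ * ((1/τ) * T * α z 0)) := by
      calc ρ (A + 2 • C) ≤ τ/2 * ρ A + τ/2 * ρ (2 • C) := hstep
        _ ≤ _ := by nlinarith [hnonneg A, hnonneg (2 • C)]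
    calc ρ (A + 2 • C) ≤ τ/2 * (α ((1/2:ℝ)•x) ((1/2:ℝ)•x) * α z 0) + τ/2 * (τ * ((1/τ) * T * α z 0)) := this
      _ = 1/τ * ((τ^2/2) * T + (τ^2/2) * α ((1/2:ℝ)•x) ((1/2:ℝ)•x)) * α z 0 := by
          field_simp
          ring
end

section
/- Let X be a normed vector space and Y_ρ a ρ-complete convex modular space satisfying the Δ₂-condition with constant τ. Let r > log₂(τ²/2) and θ > 0, and let φ: X × X → Y_ρ satisfy φ(x,0) = φ(0,z) = 0 and ρ(φ(x+y,z+w) + φ(x−y,z−w) − 2φ(x,z) − 2φ(x,w)) ≤ θ(‖x‖ʳ + ‖y‖ʳ)(‖z‖ʳ + ‖w‖ʳ). Then there exists a unique additive-quadratic mapping H: X × X → Y_ρ with ρ(φ(x,z) − H(x,z)) ≤ θτ²‖x‖ʳ‖z‖ʳ/(2^{r+1} − τ²) for all x,z ∈ X. -/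
theorem stmt17 {X Y : Type*} [NormedAddCommGroup X] [NormedSpace ℝ X]
    [AddCommGroup Y] [Module ℝ Y]
    (ρ : Y → ℝ) (φ : X → X → Y) (r θ τ : ℝ)
    (hzero : ∀ u : Y, ρ u = 0 ↔ u = 0)
    (hnonneg : ∀ u : Y, 0 ≤ ρ u)
    (hsym : ∀ (a : ℝ) (u : Y), |a| = 1 → ρ (a • u) = ρ u)
    (hconv : ∀ (a b : ℝ) (u v : Y), 0 ≤ a → 0 ≤ b → a + b = 1 →
      ρ (a • u + b • v) ≤ a * ρ u + b * ρ v)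
    (hcomplete : ∀ u : ℕ → Y,
      Filter.Tendsto (fun p : ℕ × ℕ => ρ (u p.1 - u p.2)) Filter.atTop (nhds 0) →
      ∃ l : Y, Filter.Tendsto (fun n => ρ (u n - l)) Filter.atTop (nhds 0))
    (hτ : 2 ≤ τ)
    (hΔ₂ : ∀ u : Y, ρ (2 • u) ≤ τ * ρ u)
    (hr : Real.logb 2 (τ ^ 2 / 2) < r) (hθ : 0 < θ)
    (hzeroL : ∀ z : X, φ 0 z = 0) (hzeroR : ∀ x : X, φ x 0 = 0)
    (hineq : ∀ x y z w : X,
      ρ (φ (x + y) (z + w) + φ (x - y) (z - w) - 2 • φ x z - 2 • φ x w) ≤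
        θ * (‖x‖ ^ r + ‖y‖ ^ r) * (‖z‖ ^ r + ‖w‖ ^ r)) :
    ∃! H : X → X → Y,
      ((∀ x y z : X, H (x + y) z = H x z + H y z) ∧
      (∀ x z w : X, H x (z + w) + H x (z - w) = 2 • H x z + 2 • H x w)) ∧
      (∀ x z : X, ρ (φ x z - H x z) ≤
        θ * τ ^ 2 * ‖x‖ ^ r * ‖z‖ ^ r / (2 ^ (r + 1) - τ ^ 2)) := by
  have hτ0 : (0:ℝ) < τ := by linarith
  -- basic modular facts
  have hρ0 : ρ 0 = 0 := (hzero 0).mpr rfl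
  have hρneg : ∀ u : Y, ρ (-u) = ρ u := by
    intro u
    have := hsym (-1) u (by norm_num)
    simpa using this
  have hρhalf : ∀ (a : ℝ) (u : Y), 0 ≤ a → a ≤ 1 → ρ (a • u) ≤ a * ρ u := by
    intro a u ha ha1
    have := hconv a (1 - a) u 0 ha (by linarith) (by ring)
    simpa [hρ0] using this
  -- ρ(u+v) ≤ τ/2 (ρ u + ρ v)
  have hρadd : ∀ u v : Y, ρ (u + v) ≤ τ / 2 * (ρ u + ρ v) := by
    intro u v
    have h1 : u + v = 2 • ((2⁻¹:ℝ) • u + (2⁻¹:ℝ) • v) := by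
      rw [two_smul]
      rw [← add_assoc]
      module
    rw [h1]
    calc ρ (2 • ((2⁻¹:ℝ) • u + (2⁻¹:ℝ) • v)) ≤ τ * ρ ((2⁻¹:ℝ) • u + (2⁻¹:ℝ) • v) := hΔ₂ _
      _ ≤ τ * (2⁻¹ * ρ u + 2⁻¹ * ρ v) := by
          apply mul_le_mul_of_nonneg_left _ (le_of_lt hτ0)
          exact hconv _ _ u v (by norm_num) (by norm_num) (by norm_num)
      _ = τ / 2 * (ρ u + ρ v) := by ring
  -- ρ(2^n • u) ≤ τ^n ρ u
  have hρpow : ∀ (n : ℕ) (u : Y), ρ ((2^n : ℕ) • u) ≤ τ^n * ρ u := by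
    intro n
    induction n with
    | zero => intro u; simp
    | succ n ih =>
      intro u
      have h1 : ((2^(n+1) : ℕ)) • u = (2^n : ℕ) • (2 • u) := by
        rw [← mul_smul, ← pow_succ]
      rw [h1]
      calc ρ ((2^n : ℕ) • (2 • u)) ≤ τ^n * ρ (2 • u) := ih _
        _ ≤ τ^n * (τ * ρ u) := by
            apply mul_le_mul_of_nonneg_left (hΔ₂ u) (pow_nonneg (le_of_lt hτ0) n)
        _ = τ^(n+1) * ρ u := by ring
  have hρ4 : ∀ u : Y, ρ ((4:ℕ) • u) ≤ τ^2 * ρ u := by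
    intro u
    have := hρpow 2 u
    norm_num at this
    exact this
  -- numeric setup
  set P : ℝ := (2:ℝ)^r with hPdef
  have hP0 : 0 < P := Real.rpow_pos_of_pos (by norm_num) r
  have hτ2 : τ^2 < 2 * P := by
    have h1 : (0:ℝ) < τ^2/2 := by positivity
    have := (Real.logb_lt_iff_lt_rpow (by norm_num : (1:ℝ) < 2) h1).mp hr
    rw [← hPdef] at this
    linarith
  have hr1 : 1 < r := by
    have h2 : (2:ℝ) ≤ τ^2/2 := by nlinarith
    have h3 : Real.logb 2 2 ≤ Real.logb 2 (τ^2/2) :=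
      Real.logb_le_logb_of_le (by norm_num) (by norm_num) h2
    rw [Real.logb_self_eq_one (by norm_num : (1:ℝ) < 2)] at h3
    linarith
  have hP2 : 2 ≤ P := by
    have : (2:ℝ)^(1:ℝ) ≤ (2:ℝ)^r :=
      Real.rpow_le_rpow_of_exponent_le (by norm_num) (le_of_lt hr1)
    rwa [Real.rpow_one] at this
  have hτP : τ < P := by nlinarith
  have hτ3 : τ^3 < 2 * P^2 := by nlinarith
  have hD : 0 < 2 * P - τ^2 := by linarith
  have hD2 : 0 < 2 * P^2 - τ^3 := by linarith
  set β : ℝ := τ^3 / (2 * P^2) with hβdef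
  have hβ0 : 0 ≤ β := by positivity
  have hβ1 : β < 1 := by
    rw [hβdef, div_lt_one (by positivity)]
    linarith
  set L : ℝ := 4 * τ * θ / (2 * P^2 - τ^3) with hLdef
  set K : ℝ := θ * τ^2 / (2 * P - τ^2) with hKdef
  have hL0 : 0 < L := by positivity
  have hK0 : 0 < K := by positivity
  have hLK : L ≤ K := by
    have e1 : 4*(2*P - τ^2) ≤ (2*P - τ^2)*(2*P + τ^2) := by nlinarith
    have e2 : (2*P - τ^2)*(2*P + τ^2) ≤ τ*(2*P^2 - τ^3) := by nlinarith
    have h : 4*τ*(2*P - τ^2) ≤ τ^2*(2*P^2 - τ^3) := by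
      nlinarith [mul_le_mul_of_nonneg_left (e1.trans e2) (le_of_lt hτ0)]
    rw [hLdef, hKdef, div_le_div_iff₀ hD2 hD]
    nlinarith [mul_le_mul_of_nonneg_left h (le_of_lt hθ)]
  -- norm scaling
  have hnormhalf : ∀ u : X, ‖(2⁻¹:ℝ) • u‖ ^ r = P⁻¹ * ‖u‖ ^ r := by
    intro u
    rw [norm_smul]
    have h1 : ‖(2⁻¹:ℝ)‖ = 2⁻¹ := by
      rw [Real.norm_eq_abs]; norm_num
    rw [h1, Real.mul_rpow (by norm_num) (norm_nonneg u),
      Real.inv_rpow (by norm_num), ← hPdef]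
  have hM0 : ∀ u v : X, 0 ≤ ‖u‖^r * ‖v‖^r := by
    intro u v
    positivity
  -- key consequence 1 : ρ(4 φ u v) ≤ 4θ‖u‖^r‖v‖^r
  have P1 : ∀ u v : X, ρ ((4:ℕ) • φ u v) ≤ 4 * θ * (‖u‖^r * ‖v‖^r) := by
    intro u v
    have h := hineq u (-u) v v
    have e1 : u + -u = (0:X) := by abel
    have e2 : u - -u = u + u := by abel
    have e3 : v - v = (0:X) := by abel
    rw [e1, e2, e3, hzeroL, hzeroR] at h
    have e4 : (0:Y) + 0 - 2 • φ u v - 2 • φ u v = -((4:ℕ) • φ u v) := by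
      have : (4:ℕ) • φ u v = 2 • φ u v + 2 • φ u v := by
        rw [← add_nsmul]
      rw [this]; abel
    rw [e4, hρneg] at h
    rw [norm_neg] at h
    calc ρ ((4:ℕ) • φ u v) ≤ θ * (‖u‖^r + ‖u‖^r) * (‖v‖^r + ‖v‖^r) := h
      _ = 4 * θ * (‖u‖^r * ‖v‖^r) := by ring
  -- key consequence 2 : ρ(φ(2u)(2v) - 4 φ u v) ≤ 4θ‖u‖^r‖v‖^r
  have P2 : ∀ u v : X, ρ (φ (u+u) (v+v) - (4:ℕ) • φ u v) ≤ 4 * θ * (‖u‖^r * ‖v‖^r) := by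
    intro u v
    have h := hineq u u v v
    have e1 : u - u = (0:X) := by abel
    rw [e1, hzeroL] at h
    have e4 : φ (u+u) (v+v) + 0 - 2 • φ u v - 2 • φ u v = φ (u+u) (v+v) - (4:ℕ) • φ u v := by
      have : (4:ℕ) • φ u v = 2 • φ u v + 2 • φ u v := by rw [← add_nsmul]
      rw [this]; abel
    rw [e4] at h
    calc ρ (φ (u+u) (v+v) - (4:ℕ) • φ u v) ≤ θ * (‖u‖^r + ‖u‖^r) * (‖v‖^r + ‖v‖^r) := h
      _ = 4 * θ * (‖u‖^r * ‖v‖^r) := by ring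
  -- quarter lemma: ρ w ≤ (1/4) ρ (4 • w)
  have hquarter : ∀ w : Y, ρ w ≤ 4⁻¹ * ρ ((4:ℕ) • w) := by
    intro w
    have h1 : (4⁻¹:ℝ) • ((4:ℕ) • w) = w := by
      rw [← Nat.cast_smul_eq_nsmul ℝ 4 w, smul_smul]
      norm_num
    have := hρhalf 4⁻¹ ((4:ℕ) • w) (by norm_num) (by norm_num)
    rwa [h1] at this
  -- main induction: ρ (φ u v) ≤ (L + β^n (θ - L)) * ‖u‖^r ‖v‖^r
  have key : ∀ (n : ℕ) (u v : X), ρ (φ u v) ≤ (L + β^n * (θ - L)) * (‖u‖^r * ‖v‖^r) := by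
    intro n
    induction n with
    | zero =>
      intro u v
      have h1 := hquarter (φ u v)
      have h2 := P1 u v
      calc ρ (φ u v) ≤ 4⁻¹ * ρ ((4:ℕ) • φ u v) := h1
        _ ≤ 4⁻¹ * (4 * θ * (‖u‖^r * ‖v‖^r)) := by
            apply mul_le_mul_of_nonneg_left h2 (by norm_num)
        _ = (L + β^0 * (θ - L)) * (‖u‖^r * ‖v‖^r) := by ring
    | succ n ih =>
      intro u v
      set u' : X := (2⁻¹:ℝ) • u with hu'
      set v' : X := (2⁻¹:ℝ) • v with hv'
      have hu2 : u' + u' = u := by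
        rw [hu', ← add_smul]; norm_num
      have hv2 : v' + v' = v := by
        rw [hv', ← add_smul]; norm_num
      have hd : ρ (φ u v - (4:ℕ) • φ u' v') ≤ 4 * θ * (P⁻¹ * ‖u‖^r * (P⁻¹ * ‖v‖^r)) := by
        have h := P2 u' v'
        rw [hu2, hv2, hnormhalf, hnormhalf] at h
        linarith [h]
      have hq : ρ ((4:ℕ) • φ u' v') ≤
          τ^2 * ((L + β^n * (θ - L)) * (P⁻¹ * ‖u‖^r * (P⁻¹ * ‖v‖^r))) := by
        have h1 := hρ4 (φ u' v')
        have h2 := ih u' v'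
        rw [hnormhalf, hnormhalf] at h2
        calc ρ ((4:ℕ) • φ u' v') ≤ τ^2 * ρ (φ u' v') := h1
          _ ≤ τ^2 * ((L + β^n * (θ - L)) * (P⁻¹ * ‖u‖^r * (P⁻¹ * ‖v‖^r))) :=
              mul_le_mul_of_nonneg_left h2 (by positivity)
      have hsplit : φ u v = (φ u v - (4:ℕ) • φ u' v') + (4:ℕ) • φ u' v' := by abel
      have hLe : L * (2 * P^2 - τ^3) = 4 * τ * θ := by
        rw [hLdef]; field_simp
      have hβe : β * (2 * P^2) = τ^3 := by
        rw [hβdef]; field_simp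
      have hPne : P ≠ 0 := ne_of_gt hP0
      have halg : ∀ t c : ℝ, τ / 2 * (4 * θ * (P⁻¹ * P⁻¹ * c)
            + τ^2 * ((L + t * (θ - L)) * (P⁻¹ * P⁻¹ * c)))
          = (L + (β * t) * (θ - L)) * c := by
        intro t c
        have key_eq : τ * (4 * θ + τ^2 * (L + t * (θ - L)))
            = 2 * P^2 * (L + (β * t) * (θ - L)) := by
          linear_combination (-1 : ℝ) * hLe - (t * (θ - L)) * hβe
        calc τ / 2 * (4 * θ * (P⁻¹ * P⁻¹ * c)
              + τ^2 * ((L + t * (θ - L)) * (P⁻¹ * P⁻¹ * c)))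
            = (τ * (4 * θ + τ^2 * (L + t * (θ - L)))) * (P⁻¹ * P⁻¹ * c) / 2 := by ring
          _ = (2 * P^2 * (L + (β * t) * (θ - L))) * (P⁻¹ * P⁻¹ * c) / 2 := by rw [key_eq]
          _ = (L + (β * t) * (θ - L)) * c * ((P * P⁻¹) * (P * P⁻¹)) := by ring
          _ = (L + (β * t) * (θ - L)) * c := by rw [mul_inv_cancel₀ hPne]; ring
      calc ρ (φ u v) = ρ ((φ u v - (4:ℕ) • φ u' v') + (4:ℕ) • φ u' v') := by rw [← hsplit]
        _ ≤ τ / 2 * (ρ (φ u v - (4:ℕ) • φ u' v') + ρ ((4:ℕ) • φ u' v')) := hρadd _ _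
        _ ≤ τ / 2 * (4 * θ * (P⁻¹ * ‖u‖^r * (P⁻¹ * ‖v‖^r))
            + τ^2 * ((L + β^n * (θ - L)) * (P⁻¹ * ‖u‖^r * (P⁻¹ * ‖v‖^r)))) := by
            apply mul_le_mul_of_nonneg_left (add_le_add hd hq) (by positivity)
        _ = τ / 2 * (4 * θ * (P⁻¹ * P⁻¹ * (‖u‖^r * ‖v‖^r))
            + τ^2 * ((L + β^n * (θ - L)) * (P⁻¹ * P⁻¹ * (‖u‖^r * ‖v‖^r)))) := by ring
        _ = (L + (β * β^n) * (θ - L)) * (‖u‖^r * ‖v‖^r) := halg _ _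
        _ = (L + β^(n+1) * (θ - L)) * (‖u‖^r * ‖v‖^r) := by rw [pow_succ]; ring
  -- limit: ρ (φ u v) ≤ L * ‖u‖^r ‖v‖^r
  have hbound : ∀ u v : X, ρ (φ u v) ≤ L * (‖u‖^r * ‖v‖^r) := by
    intro u v
    have hlim : Filter.Tendsto (fun n : ℕ => (L + β^n * (θ - L)) * (‖u‖^r * ‖v‖^r))
        Filter.atTop (nhds ((L + 0 * (θ - L)) * (‖u‖^r * ‖v‖^r))) := by
      apply Filter.Tendsto.mul_const
      apply Filter.Tendsto.const_add
      exact (tendsto_pow_atTop_nhds_zero_of_lt_one hβ0 hβ1).mul_const _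
    rw [show (L + 0 * (θ - L)) * (‖u‖^r * ‖v‖^r) = L * (‖u‖^r * ‖v‖^r) by ring] at hlim
    exact ge_of_tendsto' hlim (fun n => key n u v)
  have hboundK : ∀ u v : X, ρ (φ u v) ≤ K * (‖u‖^r * ‖v‖^r) := by
    intro u v
    exact le_trans (hbound u v) (mul_le_mul_of_nonneg_right hLK (hM0 u v))
  -- rewrite goal RHS
  have hRHS : ∀ u v : X, θ * τ ^ 2 * ‖u‖ ^ r * ‖v‖ ^ r / (2 ^ (r + 1) - τ ^ 2)
      = K * (‖u‖^r * ‖v‖^r) := by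
    intro u v
    have h2P : (2:ℝ) ^ (r + 1) = 2 * P := by
      rw [hPdef, Real.rpow_add (by norm_num), Real.rpow_one]; ring
    rw [h2P, hKdef]
    ring
  refine ⟨fun _ _ => 0, ⟨⟨fun x y z => by simp, fun x z w => by simp⟩, ?_⟩, ?_⟩
  · intro x z
    rw [hRHS]
    simpa using hboundK x z
  · -- uniqueness
    rintro H' ⟨⟨hadd, hquad⟩, hb'⟩
    have hb'' : ∀ u v : X, ρ (φ u v - H' u v) ≤ K * (‖u‖^r * ‖v‖^r) := by
      intro u v
      have := hb' u v
      rwa [hRHS] at this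
    -- H' 0 z = 0
    have hH0 : ∀ z : X, H' 0 z = 0 := by
      intro z
      have h := hadd 0 0 z
      simp only [add_zero] at h
      exact (left_eq_add.mp h)
    -- H' (n • x) z = n • H' x z
    have hHn : ∀ (n : ℕ) (x z : X), H' (n • x) z = n • H' x z := by
      intro n
      induction n with
      | zero => intro x z; simpa using hH0 _
      | succ n ih =>
        intro x z
        rw [succ_nsmul, succ_nsmul, hadd, ih]
    -- main estimate
    have hzero' : ∀ x z : X, ρ (H' x z) = 0 := by
      intro x z
      have hest : ∀ n : ℕ, ρ (H' x z) ≤ τ * K * (‖x‖^r * ‖z‖^r) * (τ / P)^n := by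
        intro n
        set xn : X := ((2:ℝ)⁻¹)^n • x with hxn
        have hx2 : (2^n : ℕ) • xn = x := by
          rw [hxn, ← Nat.cast_smul_eq_nsmul ℝ, smul_smul]
          norm_num
          rw [← mul_pow]
          norm_num
        have hnxn : ‖xn‖^r = (P⁻¹)^n * ‖x‖^r := by
          rw [hxn, norm_smul]
          have h1 : ‖((2:ℝ)⁻¹)^n‖ = ((2:ℝ)⁻¹)^n := by
            rw [Real.norm_eq_abs, abs_of_nonneg (by positivity)]
          rw [h1, Real.mul_rpow (by positivity) (norm_nonneg x)]
          congr 1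
          rw [← Real.rpow_natCast ((2:ℝ)⁻¹) n, ← Real.rpow_mul (by norm_num),
            mul_comm, Real.rpow_mul (by norm_num), Real.rpow_natCast,
            Real.inv_rpow (by norm_num), ← hPdef]
        -- ρ (H' xn z) ≤ τ K ‖xn‖^r ‖z‖^r
        have hstep : ρ (H' xn z) ≤ τ * K * (‖xn‖^r * ‖z‖^r) := by
          have hsplit : H' xn z = (H' xn z - φ xn z) + φ xn z := by abel
          have h1 : ρ (H' xn z - φ xn z) ≤ K * (‖xn‖^r * ‖z‖^r) := by
            rw [show H' xn z - φ xn z = -(φ xn z - H' xn z) by abel, hρneg]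
            exact hb'' xn z
          have h2 := hboundK xn z
          calc ρ (H' xn z) = ρ ((H' xn z - φ xn z) + φ xn z) := by rw [← hsplit]
            _ ≤ τ / 2 * (ρ (H' xn z - φ xn z) + ρ (φ xn z)) := hρadd _ _
            _ ≤ τ / 2 * (K * (‖xn‖^r * ‖z‖^r) + K * (‖xn‖^r * ‖z‖^r)) := by
                apply mul_le_mul_of_nonneg_left (add_le_add h1 h2) (by positivity)
            _ = τ * K * (‖xn‖^r * ‖z‖^r) := by ring
        calc ρ (H' x z) = ρ ((2^n : ℕ) • H' xn z) := by rw [← hHn, hx2]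
          _ ≤ τ^n * ρ (H' xn z) := hρpow n _
          _ ≤ τ^n * (τ * K * (‖xn‖^r * ‖z‖^r)) := by
              apply mul_le_mul_of_nonneg_left hstep (by positivity)
          _ = τ * K * (‖x‖^r * ‖z‖^r) * (τ / P)^n := by
              rw [hnxn, div_pow, division_def, inv_pow]
              ring
      have hlim : Filter.Tendsto (fun n : ℕ => τ * K * (‖x‖^r * ‖z‖^r) * (τ / P)^n)
          Filter.atTop (nhds 0) := by
        have h1 : Filter.Tendsto (fun n : ℕ => (τ / P)^n) Filter.atTop (nhds 0) :=
          tendsto_pow_atTop_nhds_zero_of_lt_one (by positivity)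
            ((div_lt_one hP0).mpr hτP)
        have := h1.const_mul (τ * K * (‖x‖^r * ‖z‖^r))
        simpa using this
      have hle : ρ (H' x z) ≤ 0 := ge_of_tendsto' hlim hest
      exact le_antisymm hle (hnonneg _)
    funext x z
    exact (hzero (H' x z)).mp (hzero' x z)
end
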